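/- arXiv:2203.03039 — 6 statements merged into one kernel-verified Lean document; each statement's English description precedes it below -/
import Mathlib

section
/- For every u, v ∈ ℂ the operator R°(u) satisfies the Yang–Baxter equation (R°(u−v))^{(12)} (R°(u))^{(13)} (R°(v))^{(23)} = (R°(v))^{(23)} (R°(u))^{(13)} (R°(u−v))^{(12)} as linear operators on (ℂ^N)^{⊗3}, and the unitarity relation R°(u) · (R°(−u))^{(21)} = Id as linear operators on ℂ^N ⊗ ℂ^N. -/
/-!
STATEMENT 0. Fix an integer `N ≥ 1`.  We work with linear operators on tensor powers of `ℂ^N`,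
encoded as matrices: an operator on `ℂ^N ⊗ ℂ^N` is a matrix indexed by `Fin N × Fin N`, and an
operator on `(ℂ^N)^{⊗3}` is a matrix indexed by `Fin N × Fin N × Fin N`.

`Rcirc N u = P + u · Σ_{i<j} E_{ii} ⊗ E_{jj}` is the R-matrix `R°(u)`; the operators
`op12, op13, op23` place an operator on `ℂ^N ⊗ ℂ^N` in the corresponding two tensor factors of
`(ℂ^N)^{⊗3}`, and `op21 A = P A P`.
-/

noncomputable section

/-- The R-matrix `R°(u) = P + u Σ_{i<j} E_{ii} ⊗ E_{jj}` on `ℂ^N ⊗ ℂ^N`. -/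
def Rcirc (N : ℕ) (u : ℂ) : Matrix (Fin N × Fin N) (Fin N × Fin N) ℂ := fun p q =>
  (if p.1 = q.2 ∧ p.2 = q.1 then 1 else 0) + u * (if p = q ∧ p.1 < p.2 then 1 else 0)

/-- `A` acting in the 1st and 2nd tensor factors of `(ℂ^N)^{⊗3}`. -/
def op12 (N : ℕ) (A : Matrix (Fin N × Fin N) (Fin N × Fin N) ℂ) :
    Matrix (Fin N × Fin N × Fin N) (Fin N × Fin N × Fin N) ℂ := fun p q =>
  A (p.1, p.2.1) (q.1, q.2.1) * (if p.2.2 = q.2.2 then 1 else 0)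

/-- `A` acting in the 1st and 3rd tensor factors of `(ℂ^N)^{⊗3}`. -/
def op13 (N : ℕ) (A : Matrix (Fin N × Fin N) (Fin N × Fin N) ℂ) :
    Matrix (Fin N × Fin N × Fin N) (Fin N × Fin N × Fin N) ℂ := fun p q =>
  A (p.1, p.2.2) (q.1, q.2.2) * (if p.2.1 = q.2.1 then 1 else 0)

/-- `A` acting in the 2nd and 3rd tensor factors of `(ℂ^N)^{⊗3}`. -/
def op23 (N : ℕ) (A : Matrix (Fin N × Fin N) (Fin N × Fin N) ℂ) :
    Matrix (Fin N × Fin N × Fin N) (Fin N × Fin N × Fin N) ℂ := fun p q =>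
  A (p.2.1, p.2.2) (q.2.1, q.2.2) * (if p.1 = q.1 then 1 else 0)

/-- `A^{(21)} = P A P` on `ℂ^N ⊗ ℂ^N`. -/
def op21 (N : ℕ) (A : Matrix (Fin N × Fin N) (Fin N × Fin N) ℂ) :
    Matrix (Fin N × Fin N) (Fin N × Fin N) ℂ := fun p q => A (p.2, p.1) (q.2, q.1)

lemma Rsum (N : ℕ) (u : ℂ) (a b : Fin N) (f : Fin N × Fin N → ℂ) :
    ∑ r, Rcirc N u (a, b) r * f r
      = f (b, a) + u * (if a < b then f (a, b) else 0) := by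
  have key : ∀ r : Fin N × Fin N, Rcirc N u (a, b) r * f r
      = (if r = (b, a) then f r else 0)
        + (if r = (a, b) then (if a < b then u * f r else 0) else 0) := by
    rintro ⟨r1, r2⟩
    simp only [Rcirc, Prod.mk.injEq, Prod.ext_iff, ite_and]
    split_ifs <;> first | ring1 | (exfalso; omega)
  rw [Finset.sum_congr rfl fun r _ => key r, Finset.sum_add_distrib,
    Finset.sum_ite_eq' _ (b, a), Finset.sum_ite_eq' _ (a, b)]
  simp [mul_ite]

/-- Reassociation equivalence for the 12-embedding. -/
def e12 (N : ℕ) : (Fin N × Fin N) × Fin N ≃ Fin N × Fin N × Fin N where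
  toFun s := (s.1.1, s.1.2, s.2)
  invFun r := ((r.1, r.2.1), r.2.2)
  left_inv := fun _ => rfl
  right_inv := fun _ => rfl

/-- Reassociation equivalence for the 13-embedding. -/
def e13 (N : ℕ) : (Fin N × Fin N) × Fin N ≃ Fin N × Fin N × Fin N where
  toFun s := (s.1.1, s.2, s.1.2)
  invFun r := ((r.1, r.2.2), r.2.1)
  left_inv := fun _ => rfl
  right_inv := fun _ => rfl

/-- Reassociation equivalence for the 23-embedding. -/
def e23 (N : ℕ) : (Fin N × Fin N) × Fin N ≃ Fin N × Fin N × Fin N where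
  toFun s := (s.2, s.1.1, s.1.2)
  invFun r := ((r.2.1, r.2.2), r.1)
  left_inv := fun _ => rfl
  right_inv := fun _ => rfl

lemma op12_apply (N : ℕ) (A : Matrix (Fin N × Fin N) (Fin N × Fin N) ℂ) (p q : Fin N × Fin N × Fin N) :
    op12 N A p q = A (p.1, p.2.1) (q.1, q.2.1) * (if p.2.2 = q.2.2 then 1 else 0) := rfl

lemma op13_apply (N : ℕ) (A : Matrix (Fin N × Fin N) (Fin N × Fin N) ℂ) (p q : Fin N × Fin N × Fin N) :
    op13 N A p q = A (p.1, p.2.2) (q.1, q.2.2) * (if p.2.1 = q.2.1 then 1 else 0) := rfl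

lemma op23_apply (N : ℕ) (A : Matrix (Fin N × Fin N) (Fin N × Fin N) ℂ) (p q : Fin N × Fin N × Fin N) :
    op23 N A p q = A (p.2.1, p.2.2) (q.2.1, q.2.2) * (if p.1 = q.1 then 1 else 0) := rfl

lemma sum12 (N : ℕ) (w : ℂ) (a b c : Fin N) (F : Fin N × Fin N × Fin N → ℂ) :
    ∑ r, op12 N (Rcirc N w) (a, b, c) r * F r
      = F (b, a, c) + w * (if a < b then F (a, b, c) else 0) := by
  rw [← Equiv.sum_comp (e12 N) (fun r => op12 N (Rcirc N w) (a, b, c) r * F r),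
    Fintype.sum_prod_type]
  simp only [e12, Equiv.coe_fn_mk, op12_apply, mul_ite, mul_one, mul_zero, ite_mul, zero_mul,
    Finset.sum_ite_eq, Finset.mem_univ, if_true]
  simpa only [Prod.mk.eta, mul_ite, mul_zero] using Rsum N w a b (fun p => F (p.1, p.2, c))

lemma sum13 (N : ℕ) (w : ℂ) (a b c : Fin N) (F : Fin N × Fin N × Fin N → ℂ) :
    ∑ r, op13 N (Rcirc N w) (a, b, c) r * F r
      = F (c, b, a) + w * (if a < c then F (a, b, c) else 0) := by
  rw [← Equiv.sum_comp (e13 N) (fun r => op13 N (Rcirc N w) (a, b, c) r * F r),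
    Fintype.sum_prod_type]
  simp only [e13, Equiv.coe_fn_mk, op13_apply, mul_ite, mul_one, mul_zero, ite_mul, zero_mul,
    Finset.sum_ite_eq, Finset.mem_univ, if_true]
  simpa only [Prod.mk.eta, mul_ite, mul_zero] using Rsum N w a c (fun p => F (p.1, b, p.2))

lemma sum23 (N : ℕ) (w : ℂ) (a b c : Fin N) (F : Fin N × Fin N × Fin N → ℂ) :
    ∑ r, op23 N (Rcirc N w) (a, b, c) r * F r
      = F (a, c, b) + w * (if b < c then F (a, b, c) else 0) := by
  rw [← Equiv.sum_comp (e23 N) (fun r => op23 N (Rcirc N w) (a, b, c) r * F r),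
    Fintype.sum_prod_type]
  simp only [e23, Equiv.coe_fn_mk, op23_apply, mul_ite, mul_one, mul_zero, ite_mul, zero_mul,
    Finset.sum_ite_eq, Finset.mem_univ, if_true]
  simpa only [Prod.mk.eta, mul_ite, mul_zero] using Rsum N w b c (fun p => F (a, p.1, p.2))

set_option maxHeartbeats 4000000 in
/-- For every `u, v ∈ ℂ` the operator `R°(u)` satisfies the Yang–Baxter equation on
`(ℂ^N)^{⊗3}` and the unitarity relation `R°(u) · (R°(−u))^{(21)} = Id` on `ℂ^N ⊗ ℂ^N`. -/
theorem yang_baxter_and_unitarity (N : ℕ) (hN : 1 ≤ N) (u v : ℂ) :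
    op12 N (Rcirc N (u - v)) * op13 N (Rcirc N u) * op23 N (Rcirc N v) =
        op23 N (Rcirc N v) * op13 N (Rcirc N u) * op12 N (Rcirc N (u - v)) ∧
      Rcirc N u * op21 N (Rcirc N (-u)) = 1 := by
  constructor
  · apply Matrix.ext
    rintro ⟨a, b, c⟩ ⟨x, y, z⟩
    rw [Matrix.mul_assoc, Matrix.mul_assoc, Matrix.mul_apply, Matrix.mul_apply]
    simp only [Matrix.mul_apply]
    rw [sum12, sum23]
    simp only [sum12, sum13, sum23]
    simp only [op12, op13, op23, Rcirc, Prod.mk.injEq, Prod.ext_iff, ite_and]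
    rcases lt_trichotomy a b with hab | hab | hab <;>
      rcases lt_trichotomy b c with hbc | hbc | hbc <;>
        rcases lt_trichotomy a c with hac | hac | hac <;>
          try (exfalso; omega)
    all_goals (first
      | simp only [eq_true (show a < b by omega)]
      | simp only [eq_false (show ¬ a < b by omega)] | skip)
    all_goals (first
      | simp only [eq_true (show b < a by omega)]
      | simp only [eq_false (show ¬ b < a by omega)] | skip)
    all_goals (first
      | simp only [eq_true (show b < c by omega)]
      | simp only [eq_false (show ¬ b < c by omega)] | skip)
    all_goals (first
      | simp only [eq_true (show c < b by omega)]
      | simp only [eq_false (show ¬ c < b by omega)] | skip)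
    all_goals (first
      | simp only [eq_true (show a < c by omega)]
      | simp only [eq_false (show ¬ a < c by omega)] | skip)
    all_goals try simp only [if_true, if_false, mul_zero, zero_mul, mul_one, one_mul,
      add_zero, zero_add]
    all_goals (split_ifs <;> first | (exfalso; omega) | ring1)
  · apply Matrix.ext
    rintro ⟨a, b⟩ ⟨x, y⟩
    rw [Matrix.mul_apply]
    rw [Rsum N u a b (fun r => op21 N (Rcirc N (-u)) r (x, y))]
    simp only [op21, Rcirc, Matrix.one_apply, Prod.mk.injEq, Prod.ext_iff, ite_and]
    split_ifs <;> first | ring1 | (exfalso; omega)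
end
end

section
/- For every fixed u ∈ ℂ, the operator (−h)^{D} R(u;h) (−h)^{−D'} on ℂ^N ⊗ ℂ^N converges entrywise to R°(u) as |h| → ∞ (i.e., along the cobounded filter on ℂ). -/
/-!
STATEMENT 1. Fix an integer `N ≥ 1`.  Operators on `ℂ^N ⊗ ℂ^N` are encoded as matrices indexed
by `Fin N × Fin N`.  `Pmat` is the flip operator, `Rcirc N u = P + u Σ_{i<j} E_{ii} ⊗ E_{jj}`,
`Rmat N u h = (u·Id − h·P)/(u − h)` is the rational R-matrix, `DL N h = (−h)^{D}` and
`DR N h = (−h)^{−D'}` are the diagonal operators multiplying `v_i ⊗ v_j` by `−h` if `i < j`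
(resp. by `(−h)⁻¹` if `i > j`) and by `1` otherwise.
-/

noncomputable section

/-- The flip `P` on `ℂ^N ⊗ ℂ^N`. -/
def Pmat (N : ℕ) : Matrix (Fin N × Fin N) (Fin N × Fin N) ℂ := fun p q =>
  if p.1 = q.2 ∧ p.2 = q.1 then 1 else 0

/-- The rational R-matrix `R(u;h) = (u·Id − h·P)/(u − h)`. -/
def Rmat (N : ℕ) (u h : ℂ) : Matrix (Fin N × Fin N) (Fin N × Fin N) ℂ :=
  (u - h)⁻¹ • (u • (1 : Matrix (Fin N × Fin N) (Fin N × Fin N) ℂ) - h • Pmat N)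

/-- `(−h)^{D}` : diagonal, multiplying `v_i ⊗ v_j` by `−h` if `i < j`, else by `1`. -/
def DL (N : ℕ) (h : ℂ) : Matrix (Fin N × Fin N) (Fin N × Fin N) ℂ :=
  Matrix.diagonal fun p => if p.1 < p.2 then -h else 1

/-- `(−h)^{−D'}` : diagonal, multiplying `v_i ⊗ v_j` by `(−h)⁻¹` if `i > j`, else by `1`. -/
def DR (N : ℕ) (h : ℂ) : Matrix (Fin N × Fin N) (Fin N × Fin N) ℂ :=
  Matrix.diagonal fun p => if p.2 < p.1 then (-h)⁻¹ else 1

/-- For every fixed `u ∈ ℂ`, the operator `(−h)^{D} R(u;h) (−h)^{−D'}` converges entrywise to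
`R°(u)` as `|h| → ∞`, i.e. along the cobounded filter on `ℂ`. -/
theorem limit_of_R_matrix (N : ℕ) (hN : 1 ≤ N) (u : ℂ) (p q : Fin N × Fin N) :
    Filter.Tendsto (fun h : ℂ => (DL N h * Rmat N u h * DR N h) p q)
      (Bornology.cobounded ℂ) (nhds (Rcirc N u p q)) := by
  have key : ∀ h : ℂ, (DL N h * Rmat N u h * DR N h) p q =
      (if p.1 < p.2 then -h else 1) *
        ((u - h)⁻¹ * (u * (if p = q then 1 else 0)
          - h * (if p.1 = q.2 ∧ p.2 = q.1 then 1 else 0))) *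
        (if q.2 < q.1 then (-h)⁻¹ else 1) := by
    intro h
    simp [DL, DR, Rmat, Pmat, Matrix.mul_diagonal, Matrix.diagonal_mul,
      Matrix.one_apply, Matrix.smul_apply, Matrix.sub_apply, mul_assoc]
    split_ifs <;> ring
  -- basic limits
  have hsub : Filter.Tendsto (fun h : ℂ => u - h) (Bornology.cobounded ℂ)
      (Bornology.cobounded ℂ) := by
    rw [← tendsto_norm_atTop_iff_cobounded]
    have h1 : Filter.Tendsto (fun h : ℂ => ‖h‖ - ‖u‖) (Bornology.cobounded ℂ) Filter.atTop :=
      Filter.tendsto_atTop_add_const_right _ (-‖u‖) tendsto_norm_cobounded_atTop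
    refine Filter.tendsto_atTop_mono (fun h => ?_) h1
    calc ‖h‖ - ‖u‖ ≤ ‖h - u‖ := norm_sub_norm_le h u
      _ = ‖u - h‖ := (norm_sub_rev h u)
  have hinv : Filter.Tendsto (fun h : ℂ => (u - h)⁻¹) (Bornology.cobounded ℂ) (nhds 0) :=
    Filter.tendsto_inv₀_cobounded.comp hsub
  have hev : ∀ᶠ h : ℂ in Bornology.cobounded ℂ, ‖u‖ + 1 ≤ ‖h‖ :=
    tendsto_norm_cobounded_atTop.eventually_ge_atTop _
  have hne : ∀ᶠ h : ℂ in Bornology.cobounded ℂ, h ≠ u ∧ h ≠ 0 := by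
    filter_upwards [hev] with h hh
    constructor
    · rintro rfl; linarith
    · rintro rfl; simp at hh; linarith [norm_nonneg u]
  have hA : Filter.Tendsto (fun h : ℂ => -h * (u - h)⁻¹) (Bornology.cobounded ℂ) (nhds 1) := by
    have : Filter.Tendsto (fun h : ℂ => 1 - u * (u - h)⁻¹) (Bornology.cobounded ℂ) (nhds 1) := by
      simpa using tendsto_const_nhds.sub (hinv.const_mul u)
    refine this.congr' ?_
    filter_upwards [hne] with h ⟨hu, h0⟩
    have huh : u - h ≠ 0 := sub_ne_zero.mpr (Ne.symm hu)
    field_simp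
    try ring
  simp only [funext key]
  obtain ⟨i, j⟩ := p
  obtain ⟨k, l⟩ := q
  have hinv2 : Filter.Tendsto (fun h : ℂ => (-h)⁻¹) (Bornology.cobounded ℂ) (nhds 0) := by
    refine Filter.tendsto_inv₀_cobounded.comp ?_
    rw [← tendsto_norm_atTop_iff_cobounded]
    simpa using tendsto_norm_cobounded_atTop (E := ℂ)
  by_cases hpq : ((i, j) : Fin N × Fin N) = (k, l)
  · rw [Prod.mk.injEq] at hpq
    obtain ⟨rfl, rfl⟩ := hpq
    rcases lt_trichotomy i j with hij | hij | hij
    · -- i < j, p = q : limit u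
      have hT : Rcirc N u (i, j) (i, j) = u := by
        simp [Rcirc, hij, hij.ne, hij.ne']
      rw [hT]
      have h1 : Filter.Tendsto (fun h : ℂ => -h * (u - h)⁻¹ * u) (Bornology.cobounded ℂ)
          (nhds u) := by simpa using hA.mul_const u
      refine h1.congr (fun h => ?_)
      simp [hij, hij.ne, hij.ne', not_lt.mpr hij.le]
      try ring
    · -- i = j : limit 1
      subst hij
      have hT : Rcirc N u (i, i) (i, i) = 1 := by simp [Rcirc]
      rw [hT]
      refine (tendsto_const_nhds.congr' ?_)
      filter_upwards [hne] with h ⟨hu, h0⟩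
      have huh : u - h ≠ 0 := sub_ne_zero.mpr (Ne.symm hu)
      simp [inv_mul_cancel₀ huh]
    · -- j < i : limit 0
      have hT : Rcirc N u (i, j) (i, j) = 0 := by
        simp [Rcirc, hij, hij.ne, hij.ne', not_lt.mpr hij.le]
      rw [hT]
      have : Filter.Tendsto (fun h : ℂ => (u - h)⁻¹ * (u * 1 - h * 0) * (-h)⁻¹)
          (Bornology.cobounded ℂ) (nhds 0) := by
        simpa using (hinv.mul_const u).mul hinv2
      refine this.congr (fun h => ?_)
      simp [hij, hij.ne, hij.ne', not_lt.mpr hij.le]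
      try ring
  · by_cases hP : i = l ∧ j = k
    · obtain ⟨rfl, rfl⟩ := hP
      have hij : i ≠ j := by
        rintro rfl; exact hpq rfl
      have hT : Rcirc N u (i, j) (j, i) = 1 := by simp [Rcirc, hpq]
      rw [hT]
      rcases hij.lt_or_gt with hlt | hlt
      · refine hA.congr' ?_
        filter_upwards [hne] with h ⟨hu, h0⟩
        have huh : u - h ≠ 0 := sub_ne_zero.mpr (Ne.symm hu)
        simp [hlt, hpq, not_lt.mpr hlt.le]
        field_simp [huh]
        try ring
      · refine hA.congr (fun h => ?_)
        simp [hlt, hpq, not_lt.mpr hlt.le]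
        try ring
    · have hT : Rcirc N u (i, j) (k, l) = 0 := by simp [Rcirc, hpq, hP]
      rw [hT]
      have hz : ∀ h : ℂ, (if (i : Fin N) < j then -h else 1) *
          ((u - h)⁻¹ * (u * (if ((i,j) : Fin N × Fin N) = (k,l) then 1 else 0)
            - h * (if (i : Fin N) = l ∧ (j : Fin N) = k then 1 else 0))) *
          (if (l : Fin N) < k then (-h)⁻¹ else 1) = 0 := by
        intro h
        simp [hpq, hP]
      simp only [hz]
      exact tendsto_const_nhds
end
end

section
/- Let I ∈ 𝓘_λ, a ∈ I_i, b ∈ I_j, a ≠ b. Then: (a) if the pair (a,b) is I-disordered, then |σ_{s_{a,b}(I)}| = |σ_I| − r_{a,b,I} − 1; (b) if the pair (a,b) is I-ordered, then |σ_{s_{a,b}(I)}| = |σ_I| + r_{a,b,I} + 1; (c) if the pair (a,b) is I-flat, then s_{a,b}(I) = I. -/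
/-!
Common setup.  Fix integers `N ≥ 1`, `n ≥ 1` and `λ = (λ_1,…,λ_N) ∈ ℤ_{≥0}^N` with
`λ_1 + ⋯ + λ_N = n` (encoded as `lam : Fin N → ℕ`, 0-indexed).  Positions in `{1,…,n}` are
encoded as elements of `Fin n` (0-indexed) and block indices in `{1,…,N}` as elements of
`Fin N` (0-indexed).  An element `I = (I_1,…,I_N) ∈ 𝓘_λ` is encoded as a function
`I : Fin N → Finset (Fin n)` satisfying `IsLamPartition`.

The variables `t^{(j)}_a` (`j = 1,…,N−1` the paper's 1-indexed group, `a` 0-indexed within the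
group) are encoded as a function `t : ℕ → ℕ → ℂ`; the convention `t^{(N)}_a = z_a` is realized
by `TT`.  The weight functions `W_I`, `W°_I` are realized as functions of the complex variables
(the symmetrizations `W`, `Wcirc` of `Ufun`, `Ucirc`); an identity of polynomials is stated as
the corresponding identity of these functions at all points where the (cancelling) denominators
do not vanish, which determines the polynomials uniquely.
-/

open scoped Classical

noncomputable section

/-- `λ^{(j)} = λ_1 + ⋯ + λ_j` for `j : ℕ` (so `Lam N lam 0 = 0`, `Lam N lam N = n`). -/
def Lam (N : ℕ) (lam : Fin N → ℕ) (j : ℕ) : ℕ :=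
  ∑ k ∈ Finset.univ.filter (fun k : Fin N => (k : ℕ) < j), lam k

/-- `I_1 ∪ ⋯ ∪ I_j` for `j : ℕ` (paper's 1-indexed `j`). -/
def cupI (N n : ℕ) (I : Fin N → Finset (Fin n)) (j : ℕ) : Finset (Fin n) :=
  (Finset.univ.filter (fun k : Fin N => (k : ℕ) < j)).biUnion I

/-- `i^{(j)}_{a+1}`: the `(a+1)`-th smallest element of `I_1 ∪ ⋯ ∪ I_j`, as a natural number. -/
def idx (N n : ℕ) (I : Fin N → Finset (Fin n)) (j a : ℕ) : ℕ :=
  (((cupI N n I j).sort (· ≤ ·)).map Fin.val).getD a 0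

/-- `z_{a+1}` for a natural-number index `a` (junk `0` out of range). -/
def zf (n : ℕ) (z : Fin n → ℂ) (a : ℕ) : ℂ := if h : a < n then z ⟨a, h⟩ else 0

/-- `TT N n t z j a = t^{(j)}_{a+1}` for `j ≤ N−1`, and `= z_{a+1}` for `j = N`. -/
def TT (N n : ℕ) (t : ℕ → ℕ → ℂ) (z : Fin n → ℂ) (j a : ℕ) : ℂ :=
  if j = N then zf n z a else t j a

/-- `I = (I_1,…,I_N)` is a member of `𝓘_λ`: the `I_j` are pairwise disjoint with union
`{1,…,n}` and `|I_j| = λ_j`. -/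
def IsLamPartition (N n : ℕ) (lam : Fin N → ℕ) (I : Fin N → Finset (Fin n)) : Prop :=
  (∀ j, (I j).card = lam j) ∧ ∀ a : Fin n, ∃! j, a ∈ I j

/-- The (finite) set `𝓘_λ`. -/
def partSet (N n : ℕ) (lam : Fin N → ℕ) : Finset (Fin N → Finset (Fin n)) :=
  Finset.univ.filter fun I => IsLamPartition N n lam I

/-- `I^min ∈ 𝓘_λ`, `I^min_j = {λ^{(j−1)}+1, …, λ^{(j)}}`. -/
def IminF (N n : ℕ) (lam : Fin N → ℕ) : Fin N → Finset (Fin n) := fun j =>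
  Finset.univ.filter fun a : Fin n =>
    Lam N lam (j : ℕ) ≤ (a : ℕ) ∧ (a : ℕ) < Lam N lam ((j : ℕ) + 1)

/-- `|σ_I| = #{(a,b) : a ∈ I_i, b ∈ I_j, a < b, i > j}`. -/
def lenI (N n : ℕ) (I : Fin N → Finset (Fin n)) : ℕ :=
  ((Finset.univ : Finset (Fin n × Fin n)).filter fun p =>
    ∃ i j : Fin N, j < i ∧ p.1 ∈ I i ∧ p.2 ∈ I j ∧ p.1 < p.2).card

/-- The Coxeter length (number of inversions) of a permutation of `{1,…,n}`. -/
def invCount (n : ℕ) (σ : Equiv.Perm (Fin n)) : ℕ :=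
  ((Finset.univ : Finset (Fin n × Fin n)).filter fun p =>
    p.1 < p.2 ∧ σ p.2 < σ p.1).card

/-- `σ = σ_I`: `σ` maps, for each `j`, the `k`-th smallest element of `I^min_j` to the `k`-th
smallest element of `I_j`; equivalently `σ(I^min_j) = I_j` and `σ` is increasing on each
`I^min_j`. -/
def IsSigmaI (N n : ℕ) (lam : Fin N → ℕ) (I : Fin N → Finset (Fin n))
    (σ : Equiv.Perm (Fin n)) : Prop :=
  (∀ j, (IminF N n lam j).image σ = I j) ∧
    ∀ j, ∀ a ∈ IminF N n lam j, ∀ b ∈ IminF N n lam j, a < b → σ a < σ b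

/-- `σ(I) = (σ(I_1),…,σ(I_N))`. -/
def sTuple (N n : ℕ) (σ : Equiv.Perm (Fin n)) (I : Fin N → Finset (Fin n)) :
    Fin N → Finset (Fin n) := fun m => (I m).image σ

/-- The function `U_I(t;z;h)`. -/
def Ufun (N n : ℕ) (lam : Fin N → ℕ) (I : Fin N → Finset (Fin n))
    (t : ℕ → ℕ → ℂ) (z : Fin n → ℂ) (h : ℂ) : ℂ :=
  ∏ j ∈ Finset.Icc 1 (N - 1), ∏ a ∈ Finset.range (Lam N lam j),
    ((∏ c ∈ Finset.range (Lam N lam (j + 1)),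
        ((if idx N n I (j + 1) c < idx N n I j a then
            TT N n t z j a - TT N n t z (j + 1) c else 1) *
          (if idx N n I j a < idx N n I (j + 1) c then
            TT N n t z j a - TT N n t z (j + 1) c - h else 1))) *
      ∏ b ∈ Finset.range (Lam N lam j),
        (if a < b then
          (TT N n t z j b - TT N n t z j a - h) / (TT N n t z j b - TT N n t z j a) else 1))

/-- The function `U°_I(t;z)`. -/
def Ucirc (N n : ℕ) (lam : Fin N → ℕ) (I : Fin N → Finset (Fin n))
    (t : ℕ → ℕ → ℂ) (z : Fin n → ℂ) : ℂ :=
  ∏ j ∈ Finset.Icc 1 (N - 1), ∏ a ∈ Finset.range (Lam N lam j),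
    ((∏ c ∈ Finset.range (Lam N lam (j + 1)),
        (if idx N n I (j + 1) c < idx N n I j a then
          TT N n t z j a - TT N n t z (j + 1) c else 1)) *
      ∏ b ∈ Finset.range (Lam N lam j),
        (if a < b then 1 / (TT N n t z j b - TT N n t z j a) else 1))

/-- The symmetrization group `S_{λ^{(1)}} × ⋯ × S_{λ^{(N−1)}}`: the component `σ k` permutes
the index set `{0,…,λ^{(k+1)}−1}` of the variables of the group `k+1` (paper's 1-indexing),
and the unused component (`k+1 = N`) is the identity. -/
def symSet (N n : ℕ) (lam : Fin N → ℕ) : Finset (Fin N → Equiv.Perm (Fin n)) :=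
  Finset.univ.filter fun σ => ∀ k : Fin N, ∀ a : Fin n,
    ((k : ℕ) + 1 = N ∨ Lam N lam ((k : ℕ) + 1) ≤ (a : ℕ)) → σ k a = a

/-- `t` with the variables of the group `j` (for `1 ≤ j ≤ N−1`) permuted by `σ ⟨j−1⟩`. -/
def permT (N n : ℕ) (σ : Fin N → Equiv.Perm (Fin n)) (t : ℕ → ℕ → ℂ) : ℕ → ℕ → ℂ :=
  fun j a =>
    if h : 1 ≤ j ∧ j ≤ N - 1 ∧ a < n then
      t j ((σ ⟨j - 1, by omega⟩ ⟨a, by omega⟩ : Fin n) : ℕ)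
    else t j a

/-- The weight function `W_I(t;z;h)` (as a function of the complex variables). -/
def W (N n : ℕ) (lam : Fin N → ℕ) (I : Fin N → Finset (Fin n))
    (t : ℕ → ℕ → ℂ) (z : Fin n → ℂ) (h : ℂ) : ℂ :=
  ∑ σ ∈ symSet N n lam, Ufun N n lam I (permT N n σ t) z h

/-- The limiting weight function `W°_I(t;z)` (as a function of the complex variables). -/
def Wcirc (N n : ℕ) (lam : Fin N → ℕ) (I : Fin N → Finset (Fin n))
    (t : ℕ → ℕ → ℂ) (z : Fin n → ℂ) : ℂ :=
  ∑ σ ∈ symSet N n lam, Ucirc N n lam I (permT N n σ t) z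

/-- `W̌_I(t;z;h) = W_{σ0(I)}(t; z_n,…,z_1; h)`. -/
def Wcheck (N n : ℕ) (lam : Fin N → ℕ) (I : Fin N → Finset (Fin n))
    (t : ℕ → ℕ → ℂ) (z : Fin n → ℂ) (h : ℂ) : ℂ :=
  W N n lam (fun j => (I j).image Fin.rev) t (fun a => z a.rev) h

/-- `W̌°_I(t;z) = W°_{σ0(I)}(t; z_n,…,z_1)`. -/
def WcheckCirc (N n : ℕ) (lam : Fin N → ℕ) (I : Fin N → Finset (Fin n))
    (t : ℕ → ℕ → ℂ) (z : Fin n → ℂ) : ℂ :=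
  Wcirc N n lam (fun j => (I j).image Fin.rev) t (fun a => z a.rev)

/-- The substitution `t = Σ_I`, i.e. `t^{(k)}_a = z_{i^{(k)}_a}`. -/
def SigT (N n : ℕ) (I : Fin N → Finset (Fin n)) (z : Fin n → ℂ) : ℕ → ℕ → ℂ :=
  fun j a => zf n z (idx N n I j a)

/-- `c_λ(t;h)`. -/
def clam (N n : ℕ) (lam : Fin N → ℕ) (t : ℕ → ℕ → ℂ) (h : ℂ) : ℂ :=
  ∏ i ∈ Finset.Icc 1 (N - 1), ∏ a ∈ Finset.range (Lam N lam i),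
    ∏ b ∈ Finset.range (Lam N lam i), if b ≠ a then t i a - t i b - h else 1

/-- `R_λ(z)`. -/
def Rlam (N n : ℕ) (lam : Fin N → ℕ) (z : Fin n → ℂ) : ℂ :=
  ∏ i ∈ Finset.Icc 1 (N - 1), ∏ a ∈ Finset.range (Lam N lam i),
    ∏ b ∈ Finset.Ico (Lam N lam i) (Lam N lam (i + 1)), (zf n z a - zf n z b)

/-- `Q_λ(z;h)`. -/
def Qlam (N n : ℕ) (lam : Fin N → ℕ) (z : Fin n → ℂ) (h : ℂ) : ℂ :=
  ∏ i ∈ Finset.Icc 1 (N - 1), ∏ a ∈ Finset.range (Lam N lam i),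
    ∏ b ∈ Finset.Ico (Lam N lam i) (Lam N lam (i + 1)), (zf n z a - zf n z b - h)

/-- `V_λ(x;y) = ∏_{i<j} ∏_{a ∈ I^min_i} ∏_{b ∈ I^min_j} (x_a − y_b)`. -/
def Vlam (N n : ℕ) (lam : Fin N → ℕ) (x y : Fin n → ℂ) : ℂ :=
  ∏ i : Fin N, ∏ j : Fin N,
    if i < j then ∏ a ∈ IminF N n lam i, ∏ b ∈ IminF N n lam j, (x a - y b) else 1

/-- The values of the `t`-variables are pairwise distinct within each group (so that the
cancelling denominators of the weight functions do not vanish). -/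
def tDistinct (N n : ℕ) (lam : Fin N → ℕ) (t : ℕ → ℕ → ℂ) : Prop :=
  ∀ j, 1 ≤ j → j ≤ N - 1 → ∀ a b, a < Lam N lam j → b < Lam N lam j → a ≠ b → t j a ≠ t j b

/-- `M = {min(a,b)+1, …, max(a,b)−1}`. -/
def Mset (n : ℕ) (a b : Fin n) : Finset (Fin n) :=
  Finset.univ.filter fun c => min a b < c ∧ c < max a b

/-- `r_{a,b,I} = |M ∩ I_i| + |M ∩ I_j| + 2|M ∩ (I_{k+1} ∪ ⋯ ∪ I_{l−1})|`,
`k = min(i,j)`, `l = max(i,j)`. -/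
def rab (N n : ℕ) (I : Fin N → Finset (Fin n)) (a b : Fin n) (i j : Fin N) : ℕ :=
  (Mset n a b ∩ I i).card + (Mset n a b ∩ I j).card +
    2 * (Mset n a b ∩
      ((Finset.univ.filter fun k : Fin N => min i j < k ∧ k < max i j)).biUnion I).card

/-- `I_{[a,b]} = I_k ∪ I_{k+1} ∪ ⋯ ∪ I_l`, `k = min(i,j)`, `l = max(i,j)`. -/
def Iab (N n : ℕ) (I : Fin N → Finset (Fin n)) (i j : Fin N) : Finset (Fin n) :=
  ((Finset.univ.filter fun k : Fin N => min i j ≤ k ∧ k ≤ max i j)).biUnion I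

/-- `λ_r` for a natural-number index `r` (1-indexed `r+1`; junk `0` out of range). -/
def lamN (N : ℕ) (lam : Fin N → ℕ) (r : ℕ) : ℕ := if h : r < N then lam ⟨r, h⟩ else 0

/-- `m_{a,b,I} = Σ_{r=k}^{l−1} (λ_r + λ_{r+1})`, `k = min(i,j)`, `l = max(i,j)`. -/
def mab (N : ℕ) (lam : Fin N → ℕ) (i j : Fin N) : ℕ :=
  ∑ r ∈ Finset.Ico (min (i : ℕ) (j : ℕ)) (max (i : ℕ) (j : ℕ)),
    (lamN N lam r + lamN N lam (r + 1))


private lemma mem_image_swap' {n : ℕ} (a b e : Fin n) (T : Finset (Fin n)) :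
    e ∈ T.image (Equiv.swap a b) ↔ Equiv.swap a b e ∈ T := by
  constructor
  · intro h
    obtain ⟨x, hx, rfl⟩ := Finset.mem_image.1 h
    simpa [Equiv.swap_apply_self] using hx
  · intro h
    exact Finset.mem_image.2 ⟨_, h, Equiv.swap_apply_self _ _ _⟩

private lemma Mset_comm' (n : ℕ) (a b : Fin n) : Mset n a b = Mset n b a := by
  simp [Mset, min_comm, max_comm]

private lemma Mset_ne {n : ℕ} {a b c : Fin n} (hc : c ∈ Mset n a b) : c ≠ a ∧ c ≠ b := by
  simp only [Mset, Finset.mem_filter, Finset.mem_univ, true_and] at hc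
  constructor
  · intro h
    rw [h] at hc
    rcases le_total a b with h' | h'
    · exact absurd hc.1 (by simp [min_eq_left h'])
    · exact absurd hc.2 (by simp [max_eq_left h'])
  · intro h
    rw [h] at hc
    rcases le_total a b with h' | h'
    · exact absurd hc.2 (by simp [max_eq_right h'])
    · exact absurd hc.1 (by simp [min_eq_right h'])

private lemma rab_symm' (N n : ℕ) (I : Fin N → Finset (Fin n)) (a b : Fin n) (i j : Fin N) :
    rab N n I a b j i = rab N n I a b i j := by
  simp only [rab, min_comm j i, max_comm j i]
  omega

private lemma rab_comm_ab' (N n : ℕ) (I : Fin N → Finset (Fin n)) (a b : Fin n) (i j : Fin N) :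
    rab N n I b a i j = rab N n I a b i j := by
  simp only [rab, Mset_comm' n b a]

private lemma sTuple_swap_swap (N n : ℕ) (a b : Fin n) (I : Fin N → Finset (Fin n)) :
    sTuple N n (Equiv.swap a b) (sTuple N n (Equiv.swap a b) I) = I := by
  funext m
  ext e
  show e ∈ ((I m).image _).image _ ↔ _
  rw [mem_image_swap', mem_image_swap', Equiv.swap_apply_self]

private lemma rab_sTuple_swap (N n : ℕ) (I : Fin N → Finset (Fin n)) (a b : Fin n)
    (i j : Fin N) :
    rab N n (sTuple N n (Equiv.swap a b) I) a b i j = rab N n I a b i j := by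
  have hinter : ∀ T : Finset (Fin n),
      Mset n a b ∩ T.image (Equiv.swap a b) = Mset n a b ∩ T := by
    intro T
    ext c
    simp only [Finset.mem_inter, mem_image_swap']
    constructor
    · rintro ⟨hc, h⟩
      obtain ⟨h1, h2⟩ := Mset_ne hc
      exact ⟨hc, by rwa [Equiv.swap_apply_of_ne_of_ne h1 h2] at h⟩
    · rintro ⟨hc, h⟩
      obtain ⟨h1, h2⟩ := Mset_ne hc
      exact ⟨hc, by rwa [Equiv.swap_apply_of_ne_of_ne h1 h2]⟩
  have hbi : ∀ F : Finset (Fin N),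
      Mset n a b ∩ F.biUnion (sTuple N n (Equiv.swap a b) I) = Mset n a b ∩ F.biUnion I := by
    intro F
    ext c
    simp only [Finset.mem_inter, Finset.mem_biUnion]
    constructor
    · rintro ⟨hc, k, hk, hck⟩
      refine ⟨hc, k, hk, ?_⟩
      obtain ⟨h1, h2⟩ := Mset_ne hc
      rw [show sTuple N n (Equiv.swap a b) I k = (I k).image (Equiv.swap a b) from rfl,
        mem_image_swap', Equiv.swap_apply_of_ne_of_ne h1 h2] at hck
      exact hck
    · rintro ⟨hc, k, hk, hck⟩
      refine ⟨hc, k, hk, ?_⟩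
      obtain ⟨h1, h2⟩ := Mset_ne hc
      rw [show sTuple N n (Equiv.swap a b) I k = (I k).image (Equiv.swap a b) from rfl,
        mem_image_swap', Equiv.swap_apply_of_ne_of_ne h1 h2]
      exact hck
  unfold rab
  rw [show sTuple N n (Equiv.swap a b) I i = (I i).image (Equiv.swap a b) from rfl,
    show sTuple N n (Equiv.swap a b) I j = (I j).image (Equiv.swap a b) from rfl,
    hinter, hinter, hbi]

private lemma lenI_eq' (N n : ℕ) (I : Fin N → Finset (Fin n)) (B : Fin n → Fin N)
    (hB : ∀ c m, c ∈ I m ↔ B c = m) :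
    lenI N n I = (Finset.univ.filter fun p : Fin n × Fin n =>
      p.1 < p.2 ∧ B p.2 < B p.1).card := by
  unfold lenI
  congr 1
  apply Finset.filter_congr
  intro p _
  constructor
  · rintro ⟨i, j, hji, h1, h2, hlt⟩
    refine ⟨hlt, ?_⟩
    rw [(hB p.1 i).1 h1, (hB p.2 j).1 h2]
    exact hji
  · rintro ⟨hlt, hBlt⟩
    exact ⟨B p.1, B p.2, hBlt, (hB p.1 _).2 rfl, (hB p.2 _).2 rfl, hlt⟩

private lemma rab_as_sum (N n : ℕ) (I : Fin N → Finset (Fin n)) (B : Fin n → Fin N)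
    (hB : ∀ c m, c ∈ I m ↔ B c = m) (a b : Fin n) (i j : Fin N) :
    (rab N n I a b i j : ℤ) =
      ∑ c ∈ Mset n a b, ((if B c = i then (1:ℤ) else 0) + (if B c = j then 1 else 0)
        + 2 * (if min i j < B c ∧ B c < max i j then 1 else 0)) := by
  have h1 : Mset n a b ∩ I i = (Mset n a b).filter fun c => B c = i := by
    ext c; simp [Finset.mem_inter, Finset.mem_filter, hB]
  have h2 : Mset n a b ∩ I j = (Mset n a b).filter fun c => B c = j := by
    ext c; simp [Finset.mem_inter, Finset.mem_filter, hB]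
  have h3 : Mset n a b ∩ (Finset.univ.filter fun k : Fin N => min i j < k ∧ k < max i j).biUnion I
      = (Mset n a b).filter fun c => min i j < B c ∧ B c < max i j := by
    ext c
    simp only [Finset.mem_inter, Finset.mem_filter, Finset.mem_biUnion, Finset.mem_univ, true_and]
    constructor
    · rintro ⟨hc, k, hk, hck⟩
      have := (hB c k).1 hck
      exact ⟨hc, this ▸ hk.1, this ▸ hk.2⟩
    · rintro ⟨hc, hl, hr⟩
      exact ⟨hc, B c, ⟨hl, hr⟩, (hB c _).2 rfl⟩
  rw [rab, h1, h2, h3]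
  push_cast [Finset.card_filter]
  rw [Finset.mul_sum, ← Finset.sum_add_distrib, ← Finset.sum_add_distrib]


private def dd {n N : ℕ} (B : Fin n → Fin N) (s : Equiv.Perm (Fin n)) (x y : Fin n) : ℤ :=
  (if x < y ∧ B (s y) < B (s x) then 1 else 0) - (if x < y ∧ B y < B x then 1 else 0)

private lemma dd_pointwise (N n : ℕ) (B : Fin n → Fin N) (a b c : Fin n)
    (s : Equiv.Perm (Fin n))
    (hsa : s a = b) (hsb : s b = a) (hsc : s c = c) (hab : a < b) (hij : B a < B b)
    (hc1 : c ≠ a) (hc2 : c ≠ b) :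
    dd B s c a + dd B s c b + dd B s a c + dd B s b c
      = if a < c ∧ c < b then ((if B c = B a then (1:ℤ) else 0)
          + (if B c = B b then 1 else 0)
          + 2 * (if B a < B c ∧ B c < B b then 1 else 0)) else 0 := by
  have hij' : (B a : ℕ) < (B b : ℕ) := hij
  have hab' : (a : ℕ) < (b : ℕ) := hab
  simp only [dd, hsc, hsa, hsb]
  simp only [Fin.lt_def, Fin.ext_iff]
  rcases lt_trichotomy (c : ℕ) (a : ℕ) with h1 | h1 | h1
  · have h2 : (c : ℕ) < (b : ℕ) := by omega
    have h3 : ¬ (a : ℕ) < (c : ℕ) := by omega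
    have h4 : ¬ (b : ℕ) < (c : ℕ) := by omega
    simp only [h1, h2, h3, h4, true_and, false_and, if_true, if_false, and_true, and_false]
    split_ifs <;> omega
  · exact absurd (Fin.ext h1) hc1
  · rcases lt_trichotomy (c : ℕ) (b : ℕ) with h2 | h2 | h2
    · have h3 : ¬ (c : ℕ) < (a : ℕ) := by omega
      have h4 : ¬ (b : ℕ) < (c : ℕ) := by omega
      simp only [h1, h2, h3, h4, true_and, false_and, if_true, if_false, and_true, and_false]
      split_ifs <;> omega
    · exact absurd (Fin.ext h2) hc2
    · have h3 : ¬ (c : ℕ) < (a : ℕ) := by omega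
      have h4 : ¬ (c : ℕ) < (b : ℕ) := by omega
      have h5 : (a : ℕ) < (c : ℕ) := by omega
      have h6 : (b : ℕ) < (c : ℕ) := by omega
      simp only [h3, h4, h5, h6, true_and, false_and, if_true, if_false, and_true, and_false]
      split_ifs <;> omega

private lemma core_lemma (N n : ℕ) (I : Fin N → Finset (Fin n)) (B : Fin n → Fin N)
    (hB : ∀ c m, c ∈ I m ↔ B c = m) (a b : Fin n) (hab : a < b) (hij : B a < B b) :
    (lenI N n (sTuple N n (Equiv.swap a b) I) : ℤ)
      = lenI N n I + rab N n I a b (B a) (B b) + 1 := by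
  set s := Equiv.swap a b with hs
  have hsa : s a = b := Equiv.swap_apply_left a b
  have hsb : s b = a := Equiv.swap_apply_right a b
  have hB' : ∀ c m, c ∈ sTuple N n s I m ↔ B (s c) = m := by
    intro c m
    rw [show sTuple N n s I m = (I m).image s from rfl, mem_image_swap', hB]
  rw [lenI_eq' N n I B hB, lenI_eq' N n _ (fun c => B (s c)) hB']
  have e1 : ((Finset.univ.filter fun p : Fin n × Fin n =>
        p.1 < p.2 ∧ B (s p.2) < B (s p.1)).card : ℤ)
      = ∑ x : Fin n, ∑ y : Fin n, (if x < y ∧ B (s y) < B (s x) then (1:ℤ) else 0) := by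
    rw [Finset.card_filter]
    push_cast
    rw [← Finset.univ_product_univ, Finset.sum_product]
  have e2 : ((Finset.univ.filter fun p : Fin n × Fin n =>
        p.1 < p.2 ∧ B p.2 < B p.1).card : ℤ)
      = ∑ x : Fin n, ∑ y : Fin n, (if x < y ∧ B y < B x then (1:ℤ) else 0) := by
    rw [Finset.card_filter]
    push_cast
    rw [← Finset.univ_product_univ, Finset.sum_product]
  rw [e1, e2]
  clear e1 e2
  have hsum : ∀ x : Fin n, ∑ y : Fin n, dd B s x y
      = (∑ y : Fin n, (if x < y ∧ B (s y) < B (s x) then (1:ℤ) else 0))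
        - ∑ y : Fin n, (if x < y ∧ B y < B x then (1:ℤ) else 0) := by
    intro x
    rw [← Finset.sum_sub_distrib]
    rfl
  have hdd : (∑ x : Fin n, ∑ y : Fin n, (if x < y ∧ B (s y) < B (s x) then (1:ℤ) else 0))
      - (∑ x : Fin n, ∑ y : Fin n, (if x < y ∧ B y < B x then (1:ℤ) else 0))
      = ∑ x : Fin n, ∑ y : Fin n, dd B s x y := by
    rw [← Finset.sum_sub_distrib]
    exact Finset.sum_congr rfl fun x _ => (hsum x).symm
  have key : (∑ x : Fin n, ∑ y : Fin n, dd B s x y)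
      = (rab N n I a b (B a) (B b) : ℤ) + 1 := by
    have hmemR : ∀ c ∈ Finset.univ \ ({a, b} : Finset (Fin n)), c ≠ a ∧ c ≠ b := by
      intro c hc
      simp only [Finset.mem_sdiff, Finset.mem_insert, Finset.mem_singleton] at hc
      exact ⟨fun h => hc.2 (Or.inl h), fun h => hc.2 (Or.inr h)⟩
    have hR : ∀ f : Fin n → ℤ, ∑ x : Fin n, f x
        = (∑ x ∈ Finset.univ \ {a, b}, f x) + f a + f b := by
      intro f
      rw [← Finset.sum_sdiff (Finset.subset_univ ({a, b} : Finset (Fin n))),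
        Finset.sum_pair (ne_of_lt hab)]
      ring
    have hdiag : ∀ x y : Fin n, ¬ x < y → dd B s x y = 0 := by
      intro x y h
      simp [dd, h]
    have hzero : ∀ x ∈ Finset.univ \ ({a, b} : Finset (Fin n)),
        ∀ y ∈ Finset.univ \ ({a, b} : Finset (Fin n)), dd B s x y = 0 := by
      intro x hx y hy
      obtain ⟨hx1, hx2⟩ := hmemR x hx
      obtain ⟨hy1, hy2⟩ := hmemR y hy
      have ex : s x = x := Equiv.swap_apply_of_ne_of_ne hx1 hx2
      have ey : s y = y := Equiv.swap_apply_of_ne_of_ne hy1 hy2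
      simp [dd, ex, ey]
    have hdab : dd B s a b = 1 := by
      simp [dd, hsa, hsb, hab, hij, not_lt.2 hij.le]
    rw [hR (fun x => ∑ y : Fin n, dd B s x y)]
    have inner1 : ∀ x ∈ Finset.univ \ ({a, b} : Finset (Fin n)),
        (∑ y : Fin n, dd B s x y) = dd B s x a + dd B s x b := by
      intro x hx
      rw [hR (dd B s x), Finset.sum_eq_zero (hzero x hx)]
      ring
    have inner2 : (∑ y : Fin n, dd B s a y)
        = (∑ y ∈ Finset.univ \ {a, b}, dd B s a y) + 1 := by
      rw [hR (dd B s a), hdiag a a (lt_irrefl a), hdab]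
      ring
    have inner3 : (∑ y : Fin n, dd B s b y)
        = ∑ y ∈ Finset.univ \ {a, b}, dd B s b y := by
      rw [hR (dd B s b), hdiag b a (not_lt.2 hab.le), hdiag b b (lt_irrefl b)]
      ring
    rw [Finset.sum_congr rfl inner1, inner2, inner3]
    have hcomb : (∑ x ∈ Finset.univ \ ({a, b} : Finset (Fin n)), (dd B s x a + dd B s x b))
        + ((∑ y ∈ Finset.univ \ ({a, b} : Finset (Fin n)), dd B s a y) + 1)
        + (∑ y ∈ Finset.univ \ ({a, b} : Finset (Fin n)), dd B s b y)
        = (∑ c ∈ Finset.univ \ ({a, b} : Finset (Fin n)),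
            (dd B s c a + dd B s c b + dd B s a c + dd B s b c)) + 1 := by
      simp only [Finset.sum_add_distrib]
      ring
    rw [hcomb]
    have hfin : (∑ c ∈ Finset.univ \ ({a, b} : Finset (Fin n)),
        (dd B s c a + dd B s c b + dd B s a c + dd B s b c))
        = (rab N n I a b (B a) (B b) : ℤ) := by
      have step1 : (∑ c ∈ Finset.univ \ ({a, b} : Finset (Fin n)),
          (dd B s c a + dd B s c b + dd B s a c + dd B s b c))
          = ∑ c ∈ Finset.univ \ ({a, b} : Finset (Fin n)),
            (if a < c ∧ c < b then ((if B c = B a then (1:ℤ) else 0)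
              + (if B c = B b then 1 else 0)
              + 2 * (if B a < B c ∧ B c < B b then 1 else 0)) else 0) := by
        refine Finset.sum_congr rfl fun c hc => ?_
        obtain ⟨hc1, hc2⟩ := hmemR c hc
        exact dd_pointwise N n B a b c s hsa hsb
          (Equiv.swap_apply_of_ne_of_ne hc1 hc2) hab hij hc1 hc2
      rw [step1, Finset.sum_ite, Finset.sum_const_zero, add_zero]
      have hMeq : (Finset.univ \ ({a, b} : Finset (Fin n))).filter (fun c => a < c ∧ c < b)
          = Mset n a b := by
        ext c
        simp only [Finset.mem_filter, Finset.mem_sdiff, Finset.mem_univ, true_and,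
          Finset.mem_insert, Finset.mem_singleton, Mset, min_eq_left hab.le,
          max_eq_right hab.le]
        constructor
        · rintro ⟨_, h⟩
          exact h
        · intro h
          refine ⟨?_, h⟩
          rintro (rfl | rfl)
          · exact lt_irrefl _ h.1
          · exact lt_irrefl _ h.2
      rw [hMeq, rab_as_sum N n I B hB a b (B a) (B b)]
      simp only [min_eq_left hij.le, max_eq_right hij.le]
    rw [hfin]
  rw [← hdd] at key
  linarith [key]

/-- Change of the length `|σ_I|` under a transposition `s_{a,b}`:
(a) if `(a,b)` is `I`-disordered then `|σ_{s_{a,b}(I)}| = |σ_I| − r_{a,b,I} − 1`;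
(b) if `(a,b)` is `I`-ordered then `|σ_{s_{a,b}(I)}| = |σ_I| + r_{a,b,I} + 1`;
(c) if `(a,b)` is `I`-flat then `s_{a,b}(I) = I`. -/
theorem length_change_under_transposition
    (N n : ℕ) (hN : 1 ≤ N) (hn : 1 ≤ n) (lam : Fin N → ℕ) (hlam : ∑ j, lam j = n)
    (I : Fin N → Finset (Fin n)) (hI : IsLamPartition N n lam I)
    (a b : Fin n) (i j : Fin N) (ha : a ∈ I i) (hb : b ∈ I j) (hab : a ≠ b) :
    ((a < b ∧ j < i) ∨ (b < a ∧ i < j) →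
        (lenI N n (sTuple N n (Equiv.swap a b) I) : ℤ) =
          (lenI N n I : ℤ) - rab N n I a b i j - 1) ∧
      ((a < b ∧ i < j) ∨ (b < a ∧ j < i) →
        (lenI N n (sTuple N n (Equiv.swap a b) I) : ℤ) =
          (lenI N n I : ℤ) + rab N n I a b i j + 1) ∧
      (i = j → sTuple N n (Equiv.swap a b) I = I) := by
  classical
  set B : Fin n → Fin N := fun c => Classical.choose (hI.2 c) with hBdef
  have hBspec : ∀ c : Fin n, c ∈ I (B c) ∧ ∀ m, c ∈ I m → m = B c := by
    intro c
    obtain ⟨h1, h2⟩ := Classical.choose_spec (hI.2 c)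
    exact ⟨h1, h2⟩
  have hB : ∀ c m, c ∈ I m ↔ B c = m := by
    intro c m
    constructor
    · intro h
      exact ((hBspec c).2 m h).symm
    · rintro rfl
      exact (hBspec c).1
  have hia : B a = i := (hB a i).1 ha
  have hjb : B b = j := (hB b j).1 hb
  have hB' : ∀ c m, c ∈ sTuple N n (Equiv.swap a b) I m ↔ B (Equiv.swap a b c) = m := by
    intro c m
    rw [show sTuple N n (Equiv.swap a b) I m = (I m).image (Equiv.swap a b) from rfl,
      mem_image_swap', hB]
  refine ⟨?_, ?_, ?_⟩
  · rintro (⟨hab', hji⟩ | ⟨hba, hij'⟩)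
    · -- a < b, j < i : apply core to I' := swap(I) with B' = B ∘ swap
      have hlt : (fun c => B (Equiv.swap a b c)) a < (fun c => B (Equiv.swap a b c)) b := by
        simp only [Equiv.swap_apply_left, Equiv.swap_apply_right, hia, hjb]
        exact hji
      have hcore := core_lemma N n (sTuple N n (Equiv.swap a b) I)
        (fun c => B (Equiv.swap a b c)) hB' a b hab' hlt
      rw [sTuple_swap_swap, rab_sTuple_swap] at hcore
      simp only [Equiv.swap_apply_left, Equiv.swap_apply_right, hia, hjb] at hcore
      rw [rab_symm'] at hcore
      linarith [hcore]
    · -- b < a, i < j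
      have hlt : (fun c => B (Equiv.swap a b c)) b < (fun c => B (Equiv.swap a b c)) a := by
        simp only [Equiv.swap_apply_left, Equiv.swap_apply_right, hia, hjb]
        exact hij'
      have hB'' : ∀ c m, c ∈ sTuple N n (Equiv.swap b a) I m ↔ B (Equiv.swap b a c) = m := by
        rw [Equiv.swap_comm b a]
        exact hB'
      have hcore := core_lemma N n (sTuple N n (Equiv.swap b a) I)
        (fun c => B (Equiv.swap b a c)) hB'' b a hba
        (by rw [Equiv.swap_comm b a]; exact hlt)
      rw [sTuple_swap_swap, rab_sTuple_swap, Equiv.swap_comm b a] at hcore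
      simp only [Equiv.swap_apply_left, Equiv.swap_apply_right, hia, hjb] at hcore
      rw [rab_comm_ab'] at hcore
      linarith [hcore]
  · rintro (⟨hab', hij'⟩ | ⟨hba, hji⟩)
    · have hcore := core_lemma N n I B hB a b hab' (by rw [hia, hjb]; exact hij')
      rw [hia, hjb] at hcore
      linarith [hcore]
    · have hcore := core_lemma N n I B hB b a hba (by rw [hia, hjb]; exact hji)
      rw [hia, hjb, Equiv.swap_comm b a, rab_comm_ab', rab_symm'] at hcore
      linarith [hcore]
  · intro hij
    funext m
    ext e
    rw [show sTuple N n (Equiv.swap a b) I m = (I m).image (Equiv.swap a b) from rfl,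
      mem_image_swap']
    rcases eq_or_ne e a with rfl | hea
    · rw [Equiv.swap_apply_left, hB, hB, hjb, hia, hij]
    · rcases eq_or_ne e b with rfl | heb
      · rw [Equiv.swap_apply_right, hB, hB, hjb, hia, hij]
      · rw [Equiv.swap_apply_of_ne_of_ne hea heb]
end
end

section
/- Let I ∈ 𝓘_λ, a ∈ I_i, b ∈ I_j, a ≠ b. Then the pair (a,b) is I-admissible of the first kind (i.e., |σ_{s_{a,b}(I)}| = |σ_I| − 1) if and only if (a,b) is I-disordered and the intersection {min(a,b)+1,…,max(a,b)−1} ∩ I_{[a,b]} is empty. -/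
/-!
Common setup.  Fix integers `N ≥ 1`, `n ≥ 1` and `λ = (λ_1,…,λ_N) ∈ ℤ_{≥0}^N` with
`λ_1 + ⋯ + λ_N = n` (encoded as `lam : Fin N → ℕ`, 0-indexed).  Positions in `{1,…,n}` are
encoded as elements of `Fin n` (0-indexed) and block indices in `{1,…,N}` as elements of
`Fin N` (0-indexed).  An element `I = (I_1,…,I_N) ∈ 𝓘_λ` is encoded as a function
`I : Fin N → Finset (Fin n)` satisfying `IsLamPartition`.

The variables `t^{(j)}_a` (`j = 1,…,N−1` the paper's 1-indexed group, `a` 0-indexed within the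
group) are encoded as a function `t : ℕ → ℕ → ℂ`; the convention `t^{(N)}_a = z_a` is realized
by `TT`.  The weight functions `W_I`, `W°_I` are realized as functions of the complex variables
(the symmetrizations `W`, `Wcirc` of `Ufun`, `Ucirc`); an identity of polynomials is stated as
the corresponding identity of these functions at all points where the (cancelling) denominators
do not vanish, which determines the polynomials uniquely.
-/

open scoped Classical

noncomputable section

private lemma key_lemma (N n : ℕ) (g : Fin n → Fin N) (a b : Fin n) (hab : a < b) :
    ((Finset.univ.filter fun p : Fin n × Fin n =>
        p.1 < p.2 ∧ g (Equiv.swap a b p.2) < g (Equiv.swap a b p.1)).card : ℤ) -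
      ((Finset.univ.filter fun p : Fin n × Fin n => p.1 < p.2 ∧ g p.2 < g p.1).card : ℤ) =
    ((if g a < g b then (1:ℤ) else 0) - (if g b < g a then 1 else 0)) +
      ∑ c : Fin n, (if a < c ∧ c < b then
        (((if g c < g b then (1:ℤ) else 0) - (if g c < g a then 1 else 0)) +
         ((if g a < g c then (1:ℤ) else 0) - (if g b < g c then 1 else 0))) else 0) := by
  classical
  have habne : a ≠ b := ne_of_lt hab
  set D : Fin n → Fin n → ℤ := fun x y =>
    (if x < y ∧ g (Equiv.swap a b y) < g (Equiv.swap a b x) then (1:ℤ) else 0) -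
      (if x < y ∧ g y < g x then (1:ℤ) else 0) with hD
  set F : Fin n → ℤ := fun c => if a < c ∧ c < b then
        (((if g c < g b then (1:ℤ) else 0) - (if g c < g a then 1 else 0)) +
         ((if g a < g c then (1:ℤ) else 0) - (if g b < g c then 1 else 0))) else 0 with hF
  have hD0 : ∀ x y : Fin n, x ≠ a → x ≠ b → y ≠ a → y ≠ b → D x y = 0 := by
    intro x y hxa hxb hya hyb
    simp [hD, Equiv.swap_apply_of_ne_of_ne hxa hxb, Equiv.swap_apply_of_ne_of_ne hya hyb]
  have lhs_eq : ((Finset.univ.filter fun p : Fin n × Fin n =>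
        p.1 < p.2 ∧ g (Equiv.swap a b p.2) < g (Equiv.swap a b p.1)).card : ℤ) -
      ((Finset.univ.filter fun p : Fin n × Fin n => p.1 < p.2 ∧ g p.2 < g p.1).card : ℤ)
      = ∑ x : Fin n, ∑ y : Fin n, D x y := by
    rw [Finset.card_filter, Finset.card_filter, Nat.cast_sum, Nat.cast_sum,
      ← Finset.sum_sub_distrib, Fintype.sum_prod_type]
    simp [hD]
  rw [lhs_eq]
  set s : Finset (Fin n) := (Finset.univ.erase a).erase b with hs
  have hbmem : b ∈ (Finset.univ : Finset (Fin n)).erase a :=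
    Finset.mem_erase.2 ⟨habne.symm, Finset.mem_univ b⟩
  have hsa : ∀ c ∈ s, c ≠ a := fun c hc =>
    (Finset.mem_erase.1 (Finset.mem_erase.1 hc).2).1
  have hsb : ∀ c ∈ s, c ≠ b := fun c hc => (Finset.mem_erase.1 hc).1
  -- swap values
  have hswa : Equiv.swap a b a = b := Equiv.swap_apply_left a b
  have hswb : Equiv.swap a b b = a := Equiv.swap_apply_right a b
  -- row sums for x ∉ {a,b}
  have row : ∀ x ∈ s, (∑ y : Fin n, D x y) = D x a + D x b := by
    intro x hx
    rw [← Finset.sum_subset (Finset.subset_univ ({a, b} : Finset (Fin n)))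
      (fun y _ hy => by
        simp only [Finset.mem_insert, Finset.mem_singleton, not_or] at hy
        exact hD0 x y (hsa x hx) (hsb x hx) hy.1 hy.2)]
    exact Finset.sum_pair habne
  -- decompose outer sum
  have outer : (∑ x : Fin n, ∑ y : Fin n, D x y)
      = (∑ y : Fin n, D a y) + (∑ y : Fin n, D b y) + ∑ x ∈ s, (D x a + D x b) := by
    rw [← Finset.add_sum_erase _ _ (Finset.mem_univ a),
      ← Finset.add_sum_erase _ _ hbmem, ← hs, Finset.sum_congr rfl row]
    ring
  -- inner sums at a and b
  have rowa : (∑ y : Fin n, D a y) = D a b + ∑ y ∈ s, D a y := by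
    rw [← Finset.add_sum_erase _ _ (Finset.mem_univ a),
      ← Finset.add_sum_erase _ _ hbmem, ← hs]
    have : D a a = 0 := by simp [hD]
    rw [this]; ring
  have rowb : (∑ y : Fin n, D b y) = ∑ y ∈ s, D b y := by
    rw [← Finset.add_sum_erase _ _ (Finset.mem_univ a),
      ← Finset.add_sum_erase _ _ hbmem, ← hs]
    have h1 : D b b = 0 := by simp [hD]
    have h2 : D b a = 0 := by simp [hD, not_lt.2 hab.le]
    rw [h1, h2]; ring
  rw [outer, rowa, rowb]
  -- per-c identity
  have perc : ∀ c ∈ s, D a c + D b c + (D c a + D c b) = F c := by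
    intro c hc
    have hca := hsa c hc
    have hcb := hsb c hc
    have e1 : Equiv.swap a b c = c := Equiv.swap_apply_of_ne_of_ne hca hcb
    by_cases hac : a < c <;> by_cases hcb2 : c < b
    · have h1 : ¬ b < c := not_lt.2 hcb2.le
      have h2 : ¬ c < a := not_lt.2 hac.le
      simp only [hD, hF, e1, hswa, hswb, hac, hcb2, h1, h2, true_and, false_and,
        if_false, if_true, and_true]
      ring
    · have hbc : b < c := lt_of_le_of_ne (not_lt.1 hcb2) (Ne.symm hcb)
      have h2 : ¬ c < a := not_lt.2 hac.le
      simp only [hD, hF, e1, hswa, hswb, hac, hcb2, hbc, h2, true_and, false_and,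
        and_false, if_false, if_true]
      ring
    · have hca2 : c < a := lt_of_le_of_ne (not_lt.1 hac) hca
      have h1 : ¬ b < c := not_lt.2 (hca2.le.trans hab.le)
      simp only [hD, hF, e1, hswa, hswb, hac, hcb2, hca2, h1, true_and, false_and,
        and_false, if_false, if_true]
      ring
    · exact absurd (lt_of_le_of_lt (not_lt.1 hac) hab) hcb2
  have hDab : D a b = (if g a < g b then (1:ℤ) else 0) - (if g b < g a then 1 else 0) := by
    simp [hD, hswa, hswb, hab]
  have hFsum : (∑ c : Fin n, F c) = ∑ c ∈ s, F c := by
    rw [← Finset.add_sum_erase _ _ (Finset.mem_univ a),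
      ← Finset.add_sum_erase _ _ hbmem, ← hs]
    have ha0 : F a = 0 := by simp [hF]
    have hb0 : F b = 0 := by simp [hF]
    rw [ha0, hb0]; ring
  have merge : ((∑ y ∈ s, D a y) + (∑ y ∈ s, D b y)) + ∑ x ∈ s, (D x a + D x b)
      = ∑ c ∈ s, F c := by
    rw [← Finset.sum_add_distrib, ← Finset.sum_add_distrib]
    exact Finset.sum_congr rfl perc
  rw [hFsum, ← merge, hDab]
  ring

private lemma aux_admissible (N n : ℕ) (lam : Fin N → ℕ) (I : Fin N → Finset (Fin n))
    (hI : IsLamPartition N n lam I) (a b : Fin n) (i j : Fin N)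
    (ha : a ∈ I i) (hb : b ∈ I j) (hab : a < b) :
    (lenI N n (sTuple N n (Equiv.swap a b) I) : ℤ) = (lenI N n I : ℤ) - 1 ↔
      (j < i ∧ Mset n a b ∩ Iab N n I i j = ∅) := by
  classical
  choose g hg1 hg2 using hI.2
  have hi : i = g a := hg2 a i ha
  have hj : j = g b := hg2 b j hb
  -- rewrite the two lengths
  have L1 : lenI N n I
      = (Finset.univ.filter fun p : Fin n × Fin n => p.1 < p.2 ∧ g p.2 < g p.1).card := by
    unfold lenI
    congr 1
    apply Finset.filter_congr
    intro p _
    constructor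
    · rintro ⟨i', j', hji, h1, h2, h3⟩
      exact ⟨h3, by rw [← hg2 p.1 i' h1, ← hg2 p.2 j' h2]; exact hji⟩
    · rintro ⟨h3, hlt⟩
      exact ⟨g p.1, g p.2, hlt, hg1 p.1, hg1 p.2, h3⟩
  have swmem : ∀ (x : Fin n) (s : Finset (Fin n)),
      x ∈ s.image (Equiv.swap a b) ↔ Equiv.swap a b x ∈ s := by
    intro x s
    constructor
    · rintro h
      obtain ⟨y, hy, rfl⟩ := Finset.mem_image.1 h
      rwa [Equiv.swap_apply_self]
    · intro h
      exact Finset.mem_image.2 ⟨_, h, Equiv.swap_apply_self _ _ _⟩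
  have L2 : lenI N n (sTuple N n (Equiv.swap a b) I)
      = (Finset.univ.filter fun p : Fin n × Fin n =>
          p.1 < p.2 ∧ g (Equiv.swap a b p.2) < g (Equiv.swap a b p.1)).card := by
    unfold lenI sTuple
    congr 1
    apply Finset.filter_congr
    intro p _
    constructor
    · rintro ⟨i', j', hji, h1, h2, h3⟩
      refine ⟨h3, ?_⟩
      rw [← hg2 _ i' ((swmem p.1 (I i')).1 h1), ← hg2 _ j' ((swmem p.2 (I j')).1 h2)]
      exact hji
    · rintro ⟨h3, hlt⟩
      exact ⟨g (Equiv.swap a b p.1), g (Equiv.swap a b p.2), hlt,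
        (swmem p.1 _).2 (hg1 _), (swmem p.2 _).2 (hg1 _), h3⟩
  have hkey := key_lemma N n g a b hab
  -- membership in the intersection
  have hmem : ∀ c : Fin n, c ∈ Mset n a b ∩ Iab N n I i j ↔
      ((a < c ∧ c < b) ∧ (min i j ≤ g c ∧ g c ≤ max i j)) := by
    intro c
    constructor
    · intro hcc
      obtain ⟨h1, h2⟩ := Finset.mem_inter.1 hcc
      have h1' := (Finset.mem_filter.1 h1).2
      obtain ⟨k, hk, hck⟩ := Finset.mem_biUnion.1 h2
      have hk' := (Finset.mem_filter.1 hk).2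
      rw [hg2 c k hck] at hk'
      rw [min_eq_left hab.le, max_eq_right hab.le] at h1'
      exact ⟨h1', hk'⟩
    · rintro ⟨⟨h1, h2⟩, h4, h5⟩
      refine Finset.mem_inter.2 ⟨Finset.mem_filter.2 ⟨Finset.mem_univ _, ?_, ?_⟩,
        Finset.mem_biUnion.2 ⟨g c, Finset.mem_filter.2 ⟨Finset.mem_univ _, h4, h5⟩, hg1 c⟩⟩
      · rwa [min_eq_left hab.le]
      · rwa [max_eq_right hab.le]
  have hempty : (Mset n a b ∩ Iab N n I i j = ∅) ↔
      ∀ c : Fin n, (a < c ∧ c < b) → ¬ (min i j ≤ g c ∧ g c ≤ max i j) := by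
    rw [Finset.eq_empty_iff_forall_notMem]
    constructor
    · intro h c hc1 hc2
      exact h c ((hmem c).2 ⟨hc1, hc2⟩)
    · intro h c hc
      obtain ⟨h1, h2⟩ := (hmem c).1 hc
      exact h c h1 h2
  rw [hempty, L1, L2]
  rw [show (((Finset.univ.filter fun p : Fin n × Fin n =>
      p.1 < p.2 ∧ g (Equiv.swap a b p.2) < g (Equiv.swap a b p.1)).card : ℤ)
      = ((Finset.univ.filter fun p : Fin n × Fin n =>
        p.1 < p.2 ∧ g p.2 < g p.1).card : ℤ) - 1) ↔
      (((Finset.univ.filter fun p : Fin n × Fin n =>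
      p.1 < p.2 ∧ g (Equiv.swap a b p.2) < g (Equiv.swap a b p.1)).card : ℤ)
      - ((Finset.univ.filter fun p : Fin n × Fin n =>
        p.1 < p.2 ∧ g p.2 < g p.1).card : ℤ) = -1) from by omega]
  rw [hkey]
  by_cases hji : j < i
  · have hji' : g b < g a := by rw [← hi, ← hj]; exact hji
    have hs0 : ((if g a < g b then (1:ℤ) else 0) - (if g b < g a then 1 else 0)) = -1 := by
      rw [if_neg (lt_asymm hji'), if_pos hji']
      norm_num
    have hnonpos : ∀ c ∈ (Finset.univ : Finset (Fin n)),
        (if a < c ∧ c < b then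
        (((if g c < g b then (1:ℤ) else 0) - (if g c < g a then 1 else 0)) +
         ((if g a < g c then (1:ℤ) else 0) - (if g b < g c then 1 else 0))) else 0) ≤ 0 := by
      intro c _
      have h1 := hji'
      simp only [Fin.lt_def] at h1 ⊢
      split_ifs <;> omega
    have hminmax : min i j = j ∧ max i j = i := ⟨min_eq_right hji.le, max_eq_left hji.le⟩
    rw [hs0]
    constructor
    · intro h
      have hzero : (∑ c : Fin n, (if a < c ∧ c < b then
        (((if g c < g b then (1:ℤ) else 0) - (if g c < g a then 1 else 0)) +
         ((if g a < g c then (1:ℤ) else 0) - (if g b < g c then 1 else 0))) else 0)) = 0 := by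
        omega
      refine ⟨hji, ?_⟩
      intro c hc1 hc2
      have := (Finset.sum_eq_zero_iff_of_nonpos hnonpos).1 hzero c (Finset.mem_univ c)
      rw [if_pos hc1] at this
      rw [hminmax.1, hminmax.2, hi, hj] at hc2
      revert this
      simp only [Fin.lt_def, Fin.le_def] at hc2 hji' ⊢
      split_ifs <;> omega
    · rintro ⟨-, h⟩
      have hzero : (∑ c : Fin n, (if a < c ∧ c < b then
        (((if g c < g b then (1:ℤ) else 0) - (if g c < g a then 1 else 0)) +
         ((if g a < g c then (1:ℤ) else 0) - (if g b < g c then 1 else 0))) else 0)) = 0 := by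
        apply Finset.sum_eq_zero
        intro c _
        by_cases hc : a < c ∧ c < b
        · have h2 := h c hc
          rw [hminmax.1, hminmax.2, hi, hj] at h2
          rw [if_pos hc]
          simp only [Fin.lt_def, Fin.le_def] at h2 hji' ⊢
          split_ifs <;> omega
        · rw [if_neg hc]
      omega
  · constructor
    · intro h
      exfalso
      have hs0 : (0:ℤ) ≤ ((if g a < g b then (1:ℤ) else 0) - (if g b < g a then 1 else 0)) := by
        have : ¬ g b < g a := by rw [← hi, ← hj]; exact hji
        rw [if_neg this]
        split_ifs <;> omega
      have hnn : (0:ℤ) ≤ ∑ c : Fin n, (if a < c ∧ c < b then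
        (((if g c < g b then (1:ℤ) else 0) - (if g c < g a then 1 else 0)) +
         ((if g a < g c then (1:ℤ) else 0) - (if g b < g c then 1 else 0))) else 0) := by
        apply Finset.sum_nonneg
        intro c _
        have h1 : ¬ g b < g a := by rw [← hi, ← hj]; exact hji
        simp only [Fin.lt_def, not_lt] at h1 ⊢
        split_ifs <;> omega
      omega
    · rintro ⟨h, -⟩
      exact absurd h hji

/-- A pair `(a,b)` is `I`-admissible of the first kind (`|σ_{s_{a,b}(I)}| = |σ_I| − 1`) if and
only if it is `I`-disordered and `{min(a,b)+1,…,max(a,b)−1} ∩ I_{[a,b]} = ∅`. -/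
theorem admissible_first_kind_iff
    (N n : ℕ) (hN : 1 ≤ N) (hn : 1 ≤ n) (lam : Fin N → ℕ) (hlam : ∑ j, lam j = n)
    (I : Fin N → Finset (Fin n)) (hI : IsLamPartition N n lam I)
    (a b : Fin n) (i j : Fin N) (ha : a ∈ I i) (hb : b ∈ I j) (hab : a ≠ b) :
    (lenI N n (sTuple N n (Equiv.swap a b) I) : ℤ) = (lenI N n I : ℤ) - 1 ↔
      ((a < b ∧ j < i) ∨ (b < a ∧ i < j)) ∧ Mset n a b ∩ Iab N n I i j = ∅ := by
  rcases lt_or_gt_of_ne hab with h | h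
  · rw [aux_admissible N n lam I hI a b i j ha hb h]
    have h' : ¬ b < a := lt_asymm h
    tauto
  · have hM : Mset n a b = Mset n b a := by
      unfold Mset
      simp only [min_comm a b, max_comm a b]
    have hIab : Iab N n I i j = Iab N n I j i := by
      unfold Iab
      simp only [min_comm i j, max_comm i j]
    rw [Equiv.swap_comm, hM, hIab,
      aux_admissible N n lam I hI b a j i hb ha h]
    have h' : ¬ a < b := lt_asymm h
    tauto
end
end

section
/- Let I ∈ 𝓘_λ, a ∈ I_i, b ∈ I_j with i ≠ j. Then the pair (a,b) is I-admissible of the second kind (i.e., |σ_{s_{a,b}(I)}| = |σ_I| + m_{a,b,I} − 1) if and only if (a,b) is I-ordered and the intersection ({1,…,min(a,b)−1} ∪ {max(a,b)+1,…,n}) ∩ I_{[a,b]} is empty. -/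
/-!
Common setup.  Fix integers `N ≥ 1`, `n ≥ 1` and `λ = (λ_1,…,λ_N) ∈ ℤ_{≥0}^N` with
`λ_1 + ⋯ + λ_N = n` (encoded as `lam : Fin N → ℕ`, 0-indexed).  Positions in `{1,…,n}` are
encoded as elements of `Fin n` (0-indexed) and block indices in `{1,…,N}` as elements of
`Fin N` (0-indexed).  An element `I = (I_1,…,I_N) ∈ 𝓘_λ` is encoded as a function
`I : Fin N → Finset (Fin n)` satisfying `IsLamPartition`.

The variables `t^{(j)}_a` (`j = 1,…,N−1` the paper's 1-indexed group, `a` 0-indexed within the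
group) are encoded as a function `t : ℕ → ℕ → ℂ`; the convention `t^{(N)}_a = z_a` is realized
by `TT`.  The weight functions `W_I`, `W°_I` are realized as functions of the complex variables
(the symmetrizations `W`, `Wcirc` of `Ufun`, `Ucirc`); an identity of polynomials is stated as
the corresponding identity of these functions at all points where the (cancelling) denominators
do not vanish, which determines the polynomials uniquely.
-/

open scoped Classical

noncomputable section

/-! ### Auxiliary lemmas for `admissible_second_kind_iff` -/

private def Dz {n N : ℕ} (h : Fin n → Fin N) (x y : Fin n) : ℤ :=
  if x < y ∧ h y < h x then 1 else 0

private lemma count_eq_sum {n N : ℕ} (h : Fin n → Fin N) :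
    (((Finset.univ : Finset (Fin n × Fin n)).filter fun p =>
        p.1 < p.2 ∧ h p.2 < h p.1).card : ℤ) =
      ∑ x : Fin n, ∑ y : Fin n, Dz h x y := by
  rw [Finset.card_filter]
  push_cast
  rw [Fintype.sum_prod_type]
  rfl

private lemma inv_swap_core {n N : ℕ} (f g : Fin n → Fin N) (a b : Fin n) (hab : a < b)
    (hf : f a < f b) (hga : g a = f b) (hgb : g b = f a)
    (hgo : ∀ c, c ≠ a → c ≠ b → g c = f c) :
    (((Finset.univ : Finset (Fin n × Fin n)).filter fun p =>
        p.1 < p.2 ∧ g p.2 < g p.1).card : ℤ) =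
      (((Finset.univ : Finset (Fin n × Fin n)).filter fun p =>
        p.1 < p.2 ∧ f p.2 < f p.1).card : ℤ) + 1 +
      ((Finset.univ.filter fun y : Fin n =>
        a < y ∧ y < b ∧ f a ≤ f y ∧ f y < f b).card : ℤ) +
      ((Finset.univ.filter fun x : Fin n =>
        a < x ∧ x < b ∧ f a < f x ∧ f x ≤ f b).card : ℤ) := by
  have hne : a ≠ b := ne_of_lt hab
  have hab' : (a : ℕ) < b := hab
  have hf' : (f a : ℕ) < f b := hf
  -- row sums for x ∈ {a, b}
  have hrow : ∀ y : Fin n, Dz g a y - Dz f a y + (Dz g b y - Dz f b y) =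
      (if y = b then (1:ℤ) else 0) +
      (if a < y ∧ y < b ∧ f a ≤ f y ∧ f y < f b then (1:ℤ) else 0) := by
    intro y
    by_cases hya : y = a
    · subst hya
      simp only [Dz, hga, hgb, Fin.lt_def, Fin.le_def, Fin.ext_iff]
      split_ifs <;> omega
    · by_cases hyb : y = b
      · subst hyb
        simp only [Dz, hga, hgb, Fin.lt_def, Fin.le_def, Fin.ext_iff]
        split_ifs <;> omega
      · have hgy := hgo y hya hyb
        have hya' : (y : ℕ) ≠ a := fun h => hya (Fin.ext h)
        have hyb' : (y : ℕ) ≠ b := fun h => hyb (Fin.ext h)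
        simp only [Dz, hga, hgb, hgy, Fin.lt_def, Fin.le_def, Fin.ext_iff]
        split_ifs <;> omega
  have hcol : ∀ x : Fin n, x ≠ a → x ≠ b →
      (∑ y : Fin n, (Dz g x y - Dz f x y)) =
      (if a < x ∧ x < b ∧ f a < f x ∧ f x ≤ f b then (1:ℤ) else 0) := by
    intro x hxa hxb
    have hgx := hgo x hxa hxb
    have hzero : ∀ y ∈ (Finset.univ : Finset (Fin n)), y ∉ ({a, b} : Finset (Fin n)) →
        Dz g x y - Dz f x y = 0 := by
      intro y _ hy
      simp only [Finset.mem_insert, Finset.mem_singleton, not_or] at hy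
      rw [Dz, Dz, hgx, hgo y hy.1 hy.2, sub_self]
    rw [← Finset.sum_subset (Finset.subset_univ ({a, b} : Finset (Fin n))) hzero,
      Finset.sum_pair hne]
    have hxa' : (x : ℕ) ≠ a := fun h => hxa (Fin.ext h)
    have hxb' : (x : ℕ) ≠ b := fun h => hxb (Fin.ext h)
    simp only [Dz, hga, hgb, hgx, Fin.lt_def, Fin.le_def, Fin.ext_iff]
    split_ifs <;> omega
  rw [count_eq_sum, count_eq_sum]
  have key : ∑ x : Fin n, ∑ y : Fin n, Dz g x y - ∑ x : Fin n, ∑ y : Fin n, Dz f x y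
      = 1 + ((Finset.univ.filter fun y : Fin n =>
        a < y ∧ y < b ∧ f a ≤ f y ∧ f y < f b).card : ℤ) +
      ((Finset.univ.filter fun x : Fin n =>
        a < x ∧ x < b ∧ f a < f x ∧ f x ≤ f b).card : ℤ) := by
    rw [← Finset.sum_sub_distrib]
    have hsplit : ∀ x : Fin n, (∑ y : Fin n, Dz g x y) - (∑ y : Fin n, Dz f x y)
        = ∑ y : Fin n, (Dz g x y - Dz f x y) := fun x => (Finset.sum_sub_distrib _ _).symm
    simp only [hsplit]
    rw [← Finset.sum_sdiff (Finset.subset_univ ({a, b} : Finset (Fin n)))]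
    have h2 : ∑ x ∈ ({a, b} : Finset (Fin n)), ∑ y : Fin n, (Dz g x y - Dz f x y)
        = 1 + ((Finset.univ.filter fun y : Fin n =>
          a < y ∧ y < b ∧ f a ≤ f y ∧ f y < f b).card : ℤ) := by
      rw [Finset.sum_pair hne, ← Finset.sum_add_distrib]
      rw [Finset.sum_congr rfl fun y _ => hrow y, Finset.sum_add_distrib,
        Finset.sum_ite_eq' Finset.univ b (fun _ => (1:ℤ)), Finset.sum_boole]
      simp
    have h1 : ∑ x ∈ (Finset.univ \ ({a, b} : Finset (Fin n))),
        ∑ y : Fin n, (Dz g x y - Dz f x y)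
        = ((Finset.univ.filter fun x : Fin n =>
          a < x ∧ x < b ∧ f a < f x ∧ f x ≤ f b).card : ℤ) := by
      rw [Finset.sum_congr rfl (fun x hx => by
        simp only [Finset.mem_sdiff, Finset.mem_insert, Finset.mem_singleton, not_or] at hx
        exact hcol x hx.2.1 hx.2.2)]
      rw [Finset.sum_subset (Finset.sdiff_subset)]
      · rw [Finset.sum_boole]
      · intro x _ hx
        simp only [Finset.mem_sdiff, Finset.mem_univ, true_and, not_not] at hx
        simp only [Finset.mem_insert, Finset.mem_singleton] at hx
        rcases hx with rfl | rfl
        · rw [if_neg]; rintro ⟨h, -⟩; exact lt_irrefl _ h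
        · rw [if_neg]; rintro ⟨-, h, -⟩; exact lt_irrefl _ h
    rw [h1, h2]; ring
  omega

private lemma lenI_eq_count {N n : ℕ} (I : Fin N → Finset (Fin n)) (f : Fin n → Fin N)
    (hmem : ∀ c k, c ∈ I k ↔ f c = k) :
    lenI N n I =
      ((Finset.univ : Finset (Fin n × Fin n)).filter fun p =>
        p.1 < p.2 ∧ f p.2 < f p.1).card := by
  unfold lenI
  congr 1
  apply Finset.filter_congr
  intro p _
  constructor
  · rintro ⟨i, j, hji, h1, h2, h3⟩
    refine ⟨h3, ?_⟩
    rw [(hmem p.1 i).mp h1, (hmem p.2 j).mp h2]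
    exact hji
  · rintro ⟨h3, hlt⟩
    exact ⟨f p.1, f p.2, hlt, (hmem p.1 _).mpr rfl, (hmem p.2 _).mpr rfl, h3⟩

private lemma aux_main (N n : ℕ) (lam : Fin N → ℕ)
    (I : Fin N → Finset (Fin n)) (hI : IsLamPartition N n lam I)
    (a b : Fin n) (i j : Fin N) (ha : a ∈ I i) (hb : b ∈ I j) (hij : i ≠ j)
    (hab : a < b) :
    (lenI N n (sTuple N n (Equiv.swap a b) I) : ℤ) =
        (lenI N n I : ℤ) + mab N lam i j - 1 ↔
      ((a < b ∧ i < j) ∨ (b < a ∧ j < i)) ∧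
        (Finset.univ.filter fun c : Fin n => c < min a b ∨ max a b < c) ∩
          Iab N n I i j = ∅ := by
  obtain ⟨hcard, huniq⟩ := hI
  choose f hf1 hf2 using huniq
  have hmem : ∀ c k, c ∈ I k ↔ f c = k := fun c k =>
    ⟨fun h => (hf2 c k h).symm, fun h => h ▸ hf1 c⟩
  set g : Fin n → Fin N := fun c => f (Equiv.swap a b c) with hg
  have hmem' : ∀ c k, c ∈ sTuple N n (Equiv.swap a b) I k ↔ g c = k := by
    intro c k
    simp only [sTuple, Finset.mem_image, hg]
    constructor
    · rintro ⟨x, hx, rfl⟩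
      rw [Equiv.swap_apply_self]
      exact (hmem x k).mp hx
    · intro h
      exact ⟨Equiv.swap a b c, (hmem _ _).mpr h, Equiv.swap_apply_self a b c⟩
  have hfa : f a = i := (hmem a i).mp ha
  have hfb : f b = j := (hmem b j).mp hb
  have hga : g a = f b := by rw [hg]; simp
  have hgb : g b = f a := by rw [hg]; simp
  have hgo : ∀ c, c ≠ a → c ≠ b → g c = f c := by
    intro c h1 h2
    rw [hg]; simp [Equiv.swap_apply_of_ne_of_ne h1 h2]
  have hlen : lenI N n I =
      ((Finset.univ : Finset (Fin n × Fin n)).filter fun p =>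
        p.1 < p.2 ∧ f p.2 < f p.1).card := lenI_eq_count I f hmem
  have hlen' : lenI N n (sTuple N n (Equiv.swap a b) I) =
      ((Finset.univ : Finset (Fin n × Fin n)).filter fun p =>
        p.1 < p.2 ∧ g p.2 < g p.1).card := lenI_eq_count _ g hmem'
  have hdisjI : ∀ k l : Fin N, k ≠ l → Disjoint (I k) (I l) := by
    intro k l hkl
    rw [Finset.disjoint_left]
    intro c hck hcl
    exact hkl (((hmem c k).mp hck).symm.trans ((hmem c l).mp hcl))
  rcases lt_or_gt_of_ne hij with hij' | hij'
  · -- case i < j : the ordered case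
    have hij'' : (i : ℕ) < j := hij'
    have hf : f a < f b := by rw [hfa, hfb]; exact hij'
    have key := inv_swap_core f g a b hab hf hga hgb hgo
    -- the two interval counts
    set c1 := (Finset.univ.filter fun y : Fin n =>
        a < y ∧ y < b ∧ f a ≤ f y ∧ f y < f b).card with hc1def
    set c2 := (Finset.univ.filter fun x : Fin n =>
        a < x ∧ x < b ∧ f a < f x ∧ f x ≤ f b).card with hc2def
    set Fi := Finset.univ.filter fun y : Fin n => a < y ∧ y < b ∧ f y = i with hFidef
    set Fj := Finset.univ.filter fun y : Fin n => a < y ∧ y < b ∧ f y = j with hFjdef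
    set Fm := Finset.univ.filter fun y : Fin n =>
        a < y ∧ y < b ∧ i < f y ∧ f y < j with hFmdef
    have hc1 : c1 = Fi.card + Fm.card := by
      rw [hc1def, hFidef, hFmdef, ← Finset.card_union_of_disjoint]
      · congr 1
        ext y
        simp only [Finset.mem_union, Finset.mem_filter, Finset.mem_univ, true_and, hfa, hfb]
        constructor
        · rintro ⟨h1, h2, h3, h4⟩
          rcases eq_or_lt_of_le h3 with he | hl
          · exact Or.inl ⟨h1, h2, he.symm⟩
          · exact Or.inr ⟨h1, h2, hl, h4⟩
        · rintro (⟨h1, h2, h3⟩ | ⟨h1, h2, h3, h4⟩)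
          · exact ⟨h1, h2, le_of_eq h3.symm, h3 ▸ hij'⟩
          · exact ⟨h1, h2, le_of_lt h3, h4⟩
      · rw [Finset.disjoint_left]
        intro y hy1 hy2
        simp only [Finset.mem_filter] at hy1 hy2
        exact absurd (hy1.2.2.2 ▸ hy2.2.2.2.1) (lt_irrefl i)
    have hc2 : c2 = Fj.card + Fm.card := by
      rw [hc2def, hFjdef, hFmdef, ← Finset.card_union_of_disjoint]
      · congr 1
        ext y
        simp only [Finset.mem_union, Finset.mem_filter, Finset.mem_univ, true_and, hfa, hfb]
        constructor
        · rintro ⟨h1, h2, h3, h4⟩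
          rcases eq_or_lt_of_le h4 with he | hl
          · exact Or.inl ⟨h1, h2, he⟩
          · exact Or.inr ⟨h1, h2, h3, hl⟩
        · rintro (⟨h1, h2, h3⟩ | ⟨h1, h2, h3, h4⟩)
          · exact ⟨h1, h2, h3 ▸ hij', le_of_eq h3⟩
          · exact ⟨h1, h2, h3, le_of_lt h4⟩
      · rw [Finset.disjoint_left]
        intro y hy1 hy2
        simp only [Finset.mem_filter] at hy1 hy2
        exact absurd (hy1.2.2.2 ▸ hy2.2.2.2.2) (lt_irrefl j)
    -- middle blocks
    set B := (Finset.univ.filter fun k : Fin N => i < k ∧ k < j).biUnion I with hBdef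
    set S := ∑ k ∈ Finset.univ.filter fun k : Fin N => i < k ∧ k < j, lam k with hSdef
    have hBmem : ∀ y, y ∈ B ↔ i < f y ∧ f y < j := by
      intro y
      rw [hBdef]
      simp only [Finset.mem_biUnion, Finset.mem_filter, Finset.mem_univ, true_and]
      constructor
      · rintro ⟨k, ⟨h1, h2⟩, hyk⟩
        have := (hmem y k).mp hyk
        subst this
        exact ⟨h1, h2⟩
      · rintro ⟨h1, h2⟩
        exact ⟨f y, ⟨h1, h2⟩, (hmem y (f y)).mpr rfl⟩
    have hBcard : B.card = S := by
      rw [hBdef, hSdef, Finset.card_biUnion (fun k _ l _ hkl => hdisjI k l hkl)]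
      exact Finset.sum_congr rfl fun k _ => hcard k
    -- bounds and equality criteria
    have hlami : 1 ≤ lam i := by
      rw [← hcard i]
      exact Finset.card_pos.mpr ⟨a, ha⟩
    have hlamj : 1 ≤ lam j := by
      rw [← hcard j]
      exact Finset.card_pos.mpr ⟨b, hb⟩
    have hsubFi : Fi ⊆ (I i).erase a := by
      intro y hy
      rw [hFidef, Finset.mem_filter] at hy
      exact Finset.mem_erase.mpr ⟨ne_of_gt hy.2.1, (hmem y i).mpr hy.2.2.2⟩
    have hsubFj : Fj ⊆ (I j).erase b := by
      intro y hy
      rw [hFjdef, Finset.mem_filter] at hy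
      exact Finset.mem_erase.mpr ⟨ne_of_lt hy.2.2.1, (hmem y j).mpr hy.2.2.2⟩
    have hsubFm : Fm ⊆ B := by
      intro y hy
      rw [hFmdef, Finset.mem_filter] at hy
      exact (hBmem y).mpr ⟨hy.2.2.2.1, hy.2.2.2.2⟩
    have hEi : ((I i).erase a).card = lam i - 1 := by
      rw [Finset.card_erase_of_mem ha, hcard i]
    have hEj : ((I j).erase b).card = lam j - 1 := by
      rw [Finset.card_erase_of_mem hb, hcard j]
    have hbi : Fi.card ≤ lam i - 1 := hEi ▸ Finset.card_le_card hsubFi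
    have hbj : Fj.card ≤ lam j - 1 := hEj ▸ Finset.card_le_card hsubFj
    have hbm : Fm.card ≤ S := hBcard ▸ Finset.card_le_card hsubFm
    have hiffi : Fi.card = lam i - 1 ↔ (∀ y ∈ I i, y ≠ a → a < y ∧ y < b) := by
      constructor
      · intro h
        have heq : Fi = (I i).erase a :=
          Finset.eq_of_subset_of_card_le hsubFi (by rw [hEi, h])
        intro y hy hya
        have : y ∈ Fi := heq ▸ Finset.mem_erase.mpr ⟨hya, hy⟩
        rw [hFidef, Finset.mem_filter] at this
        exact ⟨this.2.1, this.2.2.1⟩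
      · intro hP
        refine le_antisymm hbi ?_
        rw [← hEi]
        apply Finset.card_le_card
        intro y hy
        rw [Finset.mem_erase] at hy
        obtain ⟨h1, h2⟩ := hP y hy.2 hy.1
        rw [hFidef, Finset.mem_filter]
        exact ⟨Finset.mem_univ y, h1, h2, (hmem y i).mp hy.2⟩
    have hiffj : Fj.card = lam j - 1 ↔ (∀ y ∈ I j, y ≠ b → a < y ∧ y < b) := by
      constructor
      · intro h
        have heq : Fj = (I j).erase b :=
          Finset.eq_of_subset_of_card_le hsubFj (by rw [hEj, h])
        intro y hy hyb
        have : y ∈ Fj := heq ▸ Finset.mem_erase.mpr ⟨hyb, hy⟩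
        rw [hFjdef, Finset.mem_filter] at this
        exact ⟨this.2.1, this.2.2.1⟩
      · intro hP
        refine le_antisymm hbj ?_
        rw [← hEj]
        apply Finset.card_le_card
        intro y hy
        rw [Finset.mem_erase] at hy
        obtain ⟨h1, h2⟩ := hP y hy.2 hy.1
        rw [hFjdef, Finset.mem_filter]
        exact ⟨Finset.mem_univ y, h1, h2, (hmem y j).mp hy.2⟩
    have hiffm : Fm.card = S ↔ (∀ y : Fin n, i < f y → f y < j → a < y ∧ y < b) := by
      constructor
      · intro h
        have heq : Fm = B :=
          Finset.eq_of_subset_of_card_le hsubFm (by rw [hBcard, h])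
        intro y h1 h2
        have : y ∈ Fm := heq ▸ (hBmem y).mpr ⟨h1, h2⟩
        rw [hFmdef, Finset.mem_filter] at this
        exact ⟨this.2.1, this.2.2.1⟩
      · intro hP
        refine le_antisymm hbm ?_
        rw [← hBcard]
        apply Finset.card_le_card
        intro y hy
        obtain ⟨h1, h2⟩ := (hBmem y).mp hy
        obtain ⟨h3, h4⟩ := hP y h1 h2
        rw [hFmdef, Finset.mem_filter]
        exact ⟨Finset.mem_univ y, h3, h4, h1, h2⟩
    -- mab computation
    have hmab : mab N lam i j = lam i + lam j + 2 * S := by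
      unfold mab
      rw [min_eq_left (le_of_lt hij''), max_eq_right (le_of_lt hij'')]
      rw [Finset.sum_add_distrib]
      have e1 : ∑ r ∈ Finset.Ico (i : ℕ) (j : ℕ), lamN N lam r
          = lamN N lam (i : ℕ) + ∑ r ∈ Finset.Ico ((i : ℕ) + 1) (j : ℕ), lamN N lam r :=
        Finset.sum_eq_sum_Ico_succ_bot hij'' _
      have e2 : ∑ r ∈ Finset.Ico (i : ℕ) (j : ℕ), lamN N lam (r + 1)
          = ∑ r ∈ Finset.Ico ((i : ℕ) + 1) ((j : ℕ) + 1), lamN N lam r := by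
        rw [Finset.sum_Ico_eq_sum_range, Finset.sum_Ico_eq_sum_range]
        have hd : (j : ℕ) + 1 - ((i : ℕ) + 1) = (j : ℕ) - (i : ℕ) := by omega
        rw [hd]
        apply Finset.sum_congr rfl
        intro k _
        congr 1
        omega
      have e3 : ∑ r ∈ Finset.Ico ((i : ℕ) + 1) ((j : ℕ) + 1), lamN N lam r
          = ∑ r ∈ Finset.Ico ((i : ℕ) + 1) (j : ℕ), lamN N lam r + lamN N lam (j : ℕ) :=
        Finset.sum_Ico_succ_top (by omega) _
      have e4 : lamN N lam (i : ℕ) = lam i := by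
        rw [lamN, dif_pos i.isLt, Fin.eta]
      have e5 : lamN N lam (j : ℕ) = lam j := by
        rw [lamN, dif_pos j.isLt, Fin.eta]
      have e6 : ∑ r ∈ Finset.Ico ((i : ℕ) + 1) (j : ℕ), lamN N lam r = S := by
        rw [hSdef]
        apply Finset.sum_nbij' (i := fun r => if h : r < N then (⟨r, h⟩ : Fin N) else i)
          (j := fun k => (k : ℕ))
        · intro r hr
          rw [Finset.mem_Ico] at hr
          have hrN : r < N := lt_trans hr.2 j.isLt
          rw [dif_pos hrN]
          simp only [Finset.mem_filter, Finset.mem_univ, true_and]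
          constructor
          · exact Fin.lt_def.mpr (by simp; omega)
          · exact Fin.lt_def.mpr (by simp; omega)
        · intro k hk
          rw [Finset.mem_filter] at hk
          rw [Finset.mem_Ico]
          have h1 : (i : ℕ) < k := hk.2.1
          have h2 : (k : ℕ) < j := hk.2.2
          omega
        · intro r hr
          rw [Finset.mem_Ico] at hr
          have hrN : r < N := lt_trans hr.2 j.isLt
          rw [dif_pos hrN]
        · intro k hk
          simp [dif_pos k.isLt, Fin.eta]
        · intro r hr
          rw [Finset.mem_Ico] at hr
          have hrN : r < N := lt_trans hr.2 j.isLt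
          rw [dif_pos hrN, lamN, dif_pos hrN]
      rw [e1, e2, e3, e4, e5, e6]
      omega
    -- numeric iff
    have hnum : ((lenI N n (sTuple N n (Equiv.swap a b) I) : ℤ) =
        (lenI N n I : ℤ) + mab N lam i j - 1) ↔
        (Fi.card = lam i - 1 ∧ Fj.card = lam j - 1 ∧ Fm.card = S) := by
      rw [hlen, hlen', hmab]
      omega
    -- set condition
    have hmemIab : ∀ c, c ∈ Iab N n I i j ↔ (i ≤ f c ∧ f c ≤ j) := by
      intro c
      unfold Iab
      rw [min_eq_left (le_of_lt hij'), max_eq_right (le_of_lt hij')]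
      simp only [Finset.mem_biUnion, Finset.mem_filter, Finset.mem_univ, true_and]
      constructor
      · rintro ⟨k, ⟨h1, h2⟩, hck⟩
        have := (hmem c k).mp hck
        subst this
        exact ⟨h1, h2⟩
      · rintro ⟨h1, h2⟩
        exact ⟨f c, ⟨h1, h2⟩, (hmem c (f c)).mpr rfl⟩
    have hempty : ((Finset.univ.filter fun c : Fin n => c < min a b ∨ max a b < c) ∩
          Iab N n I i j = ∅) ↔
        ((∀ y ∈ I i, y ≠ a → a < y ∧ y < b) ∧ (∀ y ∈ I j, y ≠ b → a < y ∧ y < b) ∧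
          (∀ y : Fin n, i < f y → f y < j → a < y ∧ y < b)) := by
      rw [min_eq_left hab.le, max_eq_right hab.le, Finset.eq_empty_iff_forall_notMem]
      constructor
      · intro H
        have H' : ∀ c, i ≤ f c → f c ≤ j → a ≤ c ∧ c ≤ b := by
          intro c h1 h2
          by_contra hcon
          apply H c
          rw [Finset.mem_inter, Finset.mem_filter]
          refine ⟨⟨Finset.mem_univ c, ?_⟩, (hmemIab c).mpr ⟨h1, h2⟩⟩
          rcases le_or_gt a c with h3 | h3
          · right
            rcases le_or_gt c b with h4 | h4
            · exact absurd ⟨h3, h4⟩ hcon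
            · exact h4
          · exact Or.inl h3
        refine ⟨?_, ?_, ?_⟩
        · intro y hy hya
          have hfy : f y = i := (hmem y i).mp hy
          obtain ⟨l1, l2⟩ := H' y (le_of_eq hfy.symm) (hfy ▸ le_of_lt hij')
          refine ⟨lt_of_le_of_ne l1 (Ne.symm hya), lt_of_le_of_ne l2 ?_⟩
          intro e
          apply hij
          rw [← hfy, e, hfb]
        · intro y hy hyb
          have hfy : f y = j := (hmem y j).mp hy
          obtain ⟨l1, l2⟩ := H' y (hfy ▸ le_of_lt hij') (le_of_eq hfy)
          refine ⟨lt_of_le_of_ne l1 ?_, lt_of_le_of_ne l2 hyb⟩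
          intro e
          apply hij
          rw [← hfa, e, hfy]
        · intro y h1 h2
          obtain ⟨l1, l2⟩ := H' y (le_of_lt h1) (le_of_lt h2)
          refine ⟨lt_of_le_of_ne l1 ?_, lt_of_le_of_ne l2 ?_⟩
          · intro e
            rw [← e, hfa] at h1
            exact lt_irrefl i h1
          · intro e
            rw [e, hfb] at h2
            exact lt_irrefl j h2
      · rintro ⟨P1, P2, P3⟩ c hc
        rw [Finset.mem_inter, Finset.mem_filter] at hc
        obtain ⟨⟨-, hor⟩, hIc⟩ := hc
        obtain ⟨h1, h2⟩ := (hmemIab c).mp hIc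
        have hcc : a ≤ c ∧ c ≤ b := by
          rcases eq_or_lt_of_le h1 with he | hlt
          · have hc' : c ∈ I i := (hmem c i).mpr he.symm
            by_cases hca : c = a
            · subst hca
              exact ⟨le_refl c, le_of_lt hab⟩
            · obtain ⟨l1, l2⟩ := P1 c hc' hca
              exact ⟨le_of_lt l1, le_of_lt l2⟩
          · rcases eq_or_lt_of_le h2 with he2 | hlt2
            · have hc' : c ∈ I j := (hmem c j).mpr he2
              by_cases hcb : c = b
              · subst hcb
                exact ⟨le_of_lt hab, le_refl c⟩
              · obtain ⟨l1, l2⟩ := P2 c hc' hcb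
                exact ⟨le_of_lt l1, le_of_lt l2⟩
            · obtain ⟨l1, l2⟩ := P3 c hlt hlt2
              exact ⟨le_of_lt l1, le_of_lt l2⟩
        rcases hor with h | h
        · exact absurd hcc.1 (not_le_of_gt h)
        · exact absurd hcc.2 (not_le_of_gt h)
    rw [hnum, hempty]
    constructor
    · rintro ⟨e1, e2, e3⟩
      exact ⟨Or.inl ⟨hab, hij'⟩, hiffi.mp e1, hiffj.mp e2, hiffm.mp e3⟩
    · rintro ⟨-, P1, P2, P3⟩
      exact ⟨hiffi.mpr P1, hiffj.mpr P2, hiffm.mpr P3⟩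
  · -- case j < i : not ordered, both sides false
    have hji'' : (j : ℕ) < i := hij'
    have hf : g a < g b := by rw [hga, hgb, hfa, hfb]; exact hij'
    have key := inv_swap_core g f a b hab hf hgb.symm hga.symm
      (fun c h1 h2 => (hgo c h1 h2).symm)
    have hmabpos : 1 ≤ mab N lam i j := by
      have hlamj : 1 ≤ lam j := by
        rw [← hcard j]
        exact Finset.card_pos.mpr ⟨b, hb⟩
      unfold mab
      rw [min_eq_right (le_of_lt hji''), max_eq_left (le_of_lt hji'')]
      have hjmem : (j : ℕ) ∈ Finset.Ico (j : ℕ) (i : ℕ) := Finset.mem_Ico.mpr ⟨le_refl _, hji''⟩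
      have hterm : lamN N lam (j : ℕ) + lamN N lam ((j : ℕ) + 1) ≤
          ∑ r ∈ Finset.Ico (j : ℕ) (i : ℕ), (lamN N lam r + lamN N lam (r + 1)) :=
        Finset.single_le_sum (f := fun r => lamN N lam r + lamN N lam (r + 1))
          (fun r _ => Nat.zero_le _) hjmem
      have e5 : lamN N lam (j : ℕ) = lam j := by
        rw [lamN, dif_pos j.isLt, Fin.eta]
      omega
    apply iff_of_false
    · intro hEq
      rw [hlen, hlen'] at hEq
      omega
    · rintro ⟨hor, -⟩
      rcases hor with ⟨-, h⟩ | ⟨h, -⟩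
      · exact absurd h (not_lt_of_gt hij')
      · exact absurd h (not_lt_of_gt hab)

private lemma mab_comm (N : ℕ) (lam : Fin N → ℕ) (i j : Fin N) :
    mab N lam i j = mab N lam j i := by
  unfold mab
  rw [Nat.min_comm, Nat.max_comm]

private lemma Iab_comm (N n : ℕ) (I : Fin N → Finset (Fin n)) (i j : Fin N) :
    Iab N n I i j = Iab N n I j i := by
  unfold Iab
  rw [min_comm, max_comm]
/-- A pair `(a,b)`, `a ∈ I_i`, `b ∈ I_j`, `i ≠ j`, is `I`-admissible of the second kind
(`|σ_{s_{a,b}(I)}| = |σ_I| + m_{a,b,I} − 1`) if and only if it is `I`-ordered and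
`({1,…,min(a,b)−1} ∪ {max(a,b)+1,…,n}) ∩ I_{[a,b]} = ∅`. -/
theorem admissible_second_kind_iff
    (N n : ℕ) (hN : 1 ≤ N) (hn : 1 ≤ n) (lam : Fin N → ℕ) (hlam : ∑ j, lam j = n)
    (I : Fin N → Finset (Fin n)) (hI : IsLamPartition N n lam I)
    (a b : Fin n) (i j : Fin N) (ha : a ∈ I i) (hb : b ∈ I j) (hij : i ≠ j) :
    (lenI N n (sTuple N n (Equiv.swap a b) I) : ℤ) =
        (lenI N n I : ℤ) + mab N lam i j - 1 ↔
      ((a < b ∧ i < j) ∨ (b < a ∧ j < i)) ∧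
        (Finset.univ.filter fun c : Fin n => c < min a b ∨ max a b < c) ∩
          Iab N n I i j = ∅ := by
  rcases lt_trichotomy a b with hab | hab | hab
  · exact aux_main N n lam I hI a b i j ha hb hij hab
  · subst hab
    exact absurd ((hI.2 a).unique ha hb) hij
  · have H := aux_main N n lam I hI b a j i hb ha hij.symm hab
    rw [Equiv.swap_comm a b, mab_comm N lam i j, Iab_comm N n I i j]
    simp only [min_comm a b, max_comm a b]
    rw [show ((a < b ∧ i < j) ∨ (b < a ∧ j < i)) ↔ ((b < a ∧ j < i) ∨ (a < b ∧ i < j))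
      from or_comm]
    exact H
end
end

section
/- Let I, J ∈ 𝓘_λ. If I ≠ J and |σ_I| ≤ |σ_J|, then W_J(Σ_I; z; h) = 0 identically in z, h. Moreover, W_I(Σ_I; z; h) = c_λ(Σ_I; h) · ∏_{j=1}^{N−1} ∏_{k=j+1}^{N} ∏_{a ∈ I_j} [ ∏_{b ∈ I_k, b < a} (z_a − z_b) · ∏_{b ∈ I_k, b > a} (z_a − z_b − h) ]. -/
/-!
Common setup.  Fix integers `N ≥ 1`, `n ≥ 1` and `λ = (λ_1,…,λ_N) ∈ ℤ_{≥0}^N` with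
`λ_1 + ⋯ + λ_N = n` (encoded as `lam : Fin N → ℕ`, 0-indexed).  Positions in `{1,…,n}` are
encoded as elements of `Fin n` (0-indexed) and block indices in `{1,…,N}` as elements of
`Fin N` (0-indexed).  An element `I = (I_1,…,I_N) ∈ 𝓘_λ` is encoded as a function
`I : Fin N → Finset (Fin n)` satisfying `IsLamPartition`.

The variables `t^{(j)}_a` (`j = 1,…,N−1` the paper's 1-indexed group, `a` 0-indexed within the
group) are encoded as a function `t : ℕ → ℕ → ℂ`; the convention `t^{(N)}_a = z_a` is realized
by `TT`.  The weight functions `W_I`, `W°_I` are realized as functions of the complex variables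
(the symmetrizations `W`, `Wcirc` of `Ufun`, `Ucirc`); an identity of polynomials is stated as
the corresponding identity of these functions at all points where the (cancelling) denominators
do not vanish, which determines the polynomials uniquely.
-/

open scoped Classical

noncomputable section

namespace WFS
open Finset

variable {N n : ℕ} {lam : Fin N → ℕ} {I : Fin N → Finset (Fin n)}

lemma Lam_mono (N : ℕ) (lam : Fin N → ℕ) : Monotone (Lam N lam) := by
  intro a b hab
  unfold Lam
  apply Finset.sum_le_sum_of_subset
  intro k hk
  simp only [mem_filter, mem_univ, true_and] at *
  omega

lemma Lam_N (hlam : ∑ j, lam j = n) : Lam N lam N = n := by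
  unfold Lam
  rw [← hlam]
  apply Finset.sum_congr _ (fun _ _ => rfl)
  ext k; simp [k.isLt]

lemma Lam_le_n (hlam : ∑ j, lam j = n) (j : ℕ) (hj : j ≤ N) : Lam N lam j ≤ n := by
  rw [← Lam_N hlam]; exact Lam_mono N lam hj

section Blk

lemma mem_cupI (b : Fin n → Fin N)
    (hb1 : ∀ a, a ∈ I (b a)) (hb2 : ∀ a j, a ∈ I j → j = b a) {x : Fin n} {j : ℕ} : x ∈ cupI N n I j ↔ (b x : ℕ) < j := by
  unfold cupI
  rw [mem_biUnion]
  constructor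
  · rintro ⟨k, hk, hxk⟩
    simp only [mem_filter, mem_univ, true_and] at hk
    rwa [← hb2 x k hxk]
  · intro h
    exact ⟨b x, by simp [h], hb1 x⟩

lemma card_cupI (b : Fin n → Fin N)
    (hb1 : ∀ a, a ∈ I (b a)) (hb2 : ∀ a j, a ∈ I j → j = b a)
    (hI : IsLamPartition N n lam I) (j : ℕ) :
    (cupI N n I j).card = Lam N lam j := by
  unfold cupI Lam
  rw [card_biUnion]
  · exact Finset.sum_congr rfl (fun k _ => hI.1 k)
  · intro i hi k hk hik
    refine Finset.disjoint_left.2 (fun x hxi hxk => hik ?_)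
    rw [hb2 x i hxi, hb2 x k hxk]

lemma cupI_eq_univ (b : Fin n → Fin N)
    (hb1 : ∀ a, a ∈ I (b a)) (hb2 : ∀ a j, a ∈ I j → j = b a) {j : ℕ} (hj : N ≤ j) : cupI N n I j = univ := by
  ext x
  simp only [mem_univ, iff_true]
  exact (mem_cupI b hb1 hb2).2 (lt_of_lt_of_le (b x).isLt hj)

end Blk

section Idx

lemma idx_spec (hI : IsLamPartition N n lam I) {j a : ℕ} (ha : a < Lam N lam j) :
    ∃ x : Fin n, x ∈ cupI N n I j ∧ idx N n I j a = (x : ℕ) := by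
  classical
  obtain ⟨b, hb⟩ := Classical.axiom_of_choice (fun a : Fin n => (hI.2 a).exists)
  have hb2 : ∀ a j, a ∈ I j → j = b a := fun a j h => ((hI.2 a).unique h (hb a))
  have hcard := card_cupI b hb hb2 hI j
  set l := (cupI N n I j).sort (· ≤ ·) with hl
  have hlen : l.length = Lam N lam j := by rw [hl, Finset.length_sort, hcard]
  have ha' : a < (l.map Fin.val).length := by simpa [hlen]
  refine ⟨l.get ⟨a, by omega⟩, ?_, ?_⟩
  · rw [← Finset.mem_sort (α := Fin n) (· ≤ ·)]
    apply List.get_mem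
  · unfold idx
    rw [← hl, List.getD_eq_getElem _ _ ha', List.getElem_map]
    rfl

lemma idx_strictMono (hI : IsLamPartition N n lam I) {j a a' : ℕ}
    (h : a < a') (ha' : a' < Lam N lam j) :
    idx N n I j a < idx N n I j a' := by
  classical
  obtain ⟨b, hb⟩ := Classical.axiom_of_choice (fun a : Fin n => (hI.2 a).exists)
  have hb2 : ∀ a j, a ∈ I j → j = b a := fun a j h => ((hI.2 a).unique h (hb a))
  have hcard := card_cupI b hb hb2 hI j
  set l := (cupI N n I j).sort (· ≤ ·) with hl
  have hlen : l.length = Lam N lam j := by rw [hl, Finset.length_sort, hcard]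
  have hs : l.SortedLT := Finset.sortedLT_sort _
  have h1 : a < (l.map Fin.val).length := by simp [hlen]; omega
  have h2 : a' < (l.map Fin.val).length := by simpa [hlen]
  unfold idx
  rw [← hl, List.getD_eq_getElem _ _ h1, List.getD_eq_getElem _ _ h2,
    List.getElem_map, List.getElem_map]
  have := hs.strictMono_get (a := ⟨a, by omega⟩) (b := ⟨a', by omega⟩) (by simpa using h)
  exact this

lemma idx_surj (hI : IsLamPartition N n lam I) {j : ℕ} {x : Fin n}
    (hx : x ∈ cupI N n I j) : ∃ a < Lam N lam j, idx N n I j a = (x : ℕ) := by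
  classical
  obtain ⟨b, hb⟩ := Classical.axiom_of_choice (fun a : Fin n => (hI.2 a).exists)
  have hb2 : ∀ a j, a ∈ I j → j = b a := fun a j h => ((hI.2 a).unique h (hb a))
  have hcard := card_cupI b hb hb2 hI j
  set l := (cupI N n I j).sort (· ≤ ·) with hl
  have hlen : l.length = Lam N lam j := by rw [hl, Finset.length_sort, hcard]
  have hx' : x ∈ l := by rw [hl, Finset.mem_sort]; exact hx
  obtain ⟨i, hi⟩ := List.mem_iff_get.1 hx'
  refine ⟨i, by omega, ?_⟩
  have h1 : (i : ℕ) < (l.map Fin.val).length := by simp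
  unfold idx
  rw [← hl, List.getD_eq_getElem _ _ h1, List.getElem_map]
  rw [← hi]
  rfl

end Idx

end WFS
namespace WFS
open Finset

variable {N n : ℕ} {lam : Fin N → ℕ} {I : Fin N → Finset (Fin n)}

lemma idx_lt_n (hI : IsLamPartition N n lam I) {j a : ℕ} (ha : a < Lam N lam j) :
    idx N n I j a < n := by
  obtain ⟨x, _, hx⟩ := idx_spec hI ha
  rw [hx]; exact x.isLt

lemma idx_add_le (hI : IsLamPartition N n lam I) {j : ℕ} (k : ℕ) :
    ∀ a : ℕ, a + k < Lam N lam j → idx N n I j a + k ≤ idx N n I j (a + k) := by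
  induction k with
  | zero => simp
  | succ k ih =>
    intro a h
    have h1 : idx N n I j a + k ≤ idx N n I j (a + k) := ih a (by omega)
    have h2 : idx N n I j (a + k) < idx N n I j (a + k + 1) :=
      idx_strictMono hI (by omega) (by omega)
    have h3 : idx N n I j (a + (k + 1)) = idx N n I j (a + k + 1) := rfl
    omega

lemma idx_N_eq (hI : IsLamPartition N n lam I) (hlam : ∑ j, lam j = n)
    {a : ℕ} (ha : a < n) : idx N n I N a = a := by
  have hLN : Lam N lam N = n := Lam_N hlam
  have hlow : 0 + a ≤ idx N n I N a := by
    have h0 := idx_add_le hI (j := N) a 0 (by omega)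
    have : idx N n I N 0 + a ≤ idx N n I N a := by simpa using h0
    omega
  have hup : idx N n I N a + (n - 1 - a) ≤ idx N n I N (a + (n - 1 - a)) :=
    idx_add_le hI _ _ (by omega)
  have hlast : idx N n I N (a + (n - 1 - a)) < n := idx_lt_n hI (by omega)
  omega

/-! ### The combinatorial core lemma -/

/-- `#{z ≤ v : f z < j}`. -/
def cnt (n : ℕ) (f : Fin n → ℕ) (j v : ℕ) : ℕ :=
  ((univ : Finset (Fin n)).filter (fun z : Fin n => (z : ℕ) ≤ v ∧ f z < j)).card

/-- number of inversions of a block function. -/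
def lenF (n : ℕ) (f : Fin n → ℕ) : ℕ :=
  ((univ : Finset (Fin n × Fin n)).filter (fun p => p.1 < p.2 ∧ f p.2 < f p.1)).card

lemma card_filter_comp_equiv {P : Fin n → Prop} [DecidablePred P] (e : Equiv.Perm (Fin n)) :
    ((univ : Finset (Fin n)).filter (fun z => P (e z))).card
      = ((univ : Finset (Fin n)).filter P).card := by
  classical
  apply Finset.card_bij' (fun z _ => e z) (fun z _ => e.symm z)
  · intro a ha; simp only [mem_filter, mem_univ, true_and] at *; exact ha
  · intro a ha; simp only [mem_filter, mem_univ, true_and] at *; simpa using ha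
  · intro a _; simp
  · intro a _; simp

lemma lenF_eq_sum (f : Fin n → ℕ) :
    lenF n f = ∑ a : Fin n, ∑ b : Fin n, (if a < b ∧ f b < f a then 1 else 0) := by
  classical
  rw [lenF, Finset.card_filter, ← Finset.univ_product_univ, Finset.sum_product]

end WFS
namespace WFS
open Finset

variable {n : ℕ}

lemma core_lemma (n K : ℕ) : ∀ d : ℕ, ∀ β γ : Fin n → ℕ,
    (∀ z, γ z < K) →
    (∀ j : ℕ, ((univ : Finset (Fin n)).filter fun z => β z < j).card
        = ((univ : Finset (Fin n)).filter fun z => γ z < j).card) →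
    (∀ j v : ℕ, cnt n β j v ≤ cnt n γ j v) →
    β ≠ γ →
    (∑ jv ∈ Finset.range (K + 1) ×ˢ Finset.range n,
        (cnt n γ jv.1 jv.2 - cnt n β jv.1 jv.2)) = d →
    lenF n γ < lenF n β := by
  intro d
  induction d using Nat.strong_induction_on with
  | _ d IH =>
  intro β γ hγK hsh hdom hne hD
  classical
  -- Step 1: there is y with β y < γ y
  have hex : ∃ y, β y < γ y := by
    by_contra hno
    push_neg at hno
    apply hne
    funext z
    have hset : ∀ j : ℕ, ((univ : Finset (Fin n)).filter fun w => β w < j)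
        = ((univ : Finset (Fin n)).filter fun w => γ w < j) := by
      intro j
      apply Finset.eq_of_subset_of_card_le
      · intro w hw
        simp only [mem_filter, mem_univ, true_and] at hw ⊢
        exact lt_of_le_of_lt (hno w) hw
      · exact le_of_eq (hsh j).symm
    have h2 : z ∈ (univ : Finset (Fin n)).filter fun w => γ w < γ z + 1 := by simp
    rw [← hset (γ z + 1)] at h2
    simp only [mem_filter, mem_univ, true_and] at h2
    have := hno z
    omega
  have hYne : ((univ : Finset (Fin n)).filter (fun z => β z < γ z)).Nonempty := by
    obtain ⟨y, hy⟩ := hex; exact ⟨y, by simp [hy]⟩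
  obtain ⟨y, hβγy, hmin⟩ : ∃ y : Fin n, β y < γ y ∧ ∀ z : Fin n, z < y → γ z ≤ β z := by
    refine ⟨Finset.min' _ hYne, ?_, ?_⟩
    · have := Finset.min'_mem _ hYne
      simp only [mem_filter, mem_univ, true_and] at this
      exact this
    · intro z hz
      by_contra h
      push_neg at h
      have hle : Finset.min' _ hYne ≤ z := Finset.min'_le _ _ (by
        simp only [mem_filter, mem_univ, true_and]; exact h)
      exact absurd (lt_of_lt_of_le hz hle) (lt_irrefl _)
  -- Step 2: subset fact
  have hsub : ∀ (j v : ℕ), v < (y : ℕ) →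
      ((univ : Finset (Fin n)).filter fun z : Fin n => (z : ℕ) ≤ v ∧ β z < j)
        ⊆ ((univ : Finset (Fin n)).filter fun z : Fin n => (z : ℕ) ≤ v ∧ γ z < j) := by
    intro j v hv z hzmem
    simp only [mem_filter, mem_univ, true_and] at hzmem ⊢
    refine ⟨hzmem.1, lt_of_le_of_lt (hmin z ?_) hzmem.2⟩
    exact Fin.lt_def.2 (by omega)
  -- Step 3: existence of x
  have hxex : ∃ x : Fin n, x < y ∧ γ x < γ y ∧ γ y ≤ β x := by
    by_contra hno
    push_neg at hno
    have hSsub : ((univ : Finset (Fin n)).filter fun z : Fin n => (z : ℕ) ≤ (y : ℕ) ∧ γ z < γ y)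
        ⊆ (((univ : Finset (Fin n)).filter fun z : Fin n => (z : ℕ) ≤ (y : ℕ) ∧ β z < γ y).erase y) := by
      intro z hz
      simp only [mem_filter, mem_univ, true_and, mem_erase] at hz ⊢
      have hzy : z ≠ y := by
        intro h; subst h; omega
      have hzlt : z < y := Fin.lt_def.2 (by
        have := Fin.val_ne_of_ne hzy; omega)
      exact ⟨hzy, hz.1, hno z hzlt hz.2⟩
    have hymem : y ∈ ((univ : Finset (Fin n)).filter
        fun z : Fin n => (z : ℕ) ≤ (y : ℕ) ∧ β z < γ y) := by
      simp only [mem_filter, mem_univ, true_and]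
      exact ⟨le_refl _, hβγy⟩
    have h1 := Finset.card_le_card hSsub
    rw [Finset.card_erase_of_mem hymem] at h1
    have h2 := hdom (γ y) (y : ℕ)
    unfold cnt at h2
    have h3 := Finset.card_pos.2 ⟨y, hymem⟩
    omega
  obtain ⟨x, hxy, hγx, hβx⟩ := hxex
  have hxyv : (x : ℕ) < (y : ℕ) := hxy
  have hxny : x ≠ y := Fin.ne_of_lt hxy
  have hex1 : Equiv.swap x y x = y := Equiv.swap_apply_left x y
  have hex2 : Equiv.swap x y y = x := Equiv.swap_apply_right x y
  have hex3 : ∀ z : Fin n, z ≠ x → z ≠ y → Equiv.swap x y z = z := fun z h1 h2 =>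
    Equiv.swap_apply_of_ne_of_ne h1 h2
  set γ₂ : Fin n → ℕ := fun z => γ (Equiv.swap x y z) with hγ₂def
  have hγ₂x : γ₂ x = γ y := by rw [hγ₂def]; simp only [hex1]
  have hγ₂y : γ₂ y = γ x := by rw [hγ₂def]; simp only [hex2]
  have hγ₂z : ∀ z, z ≠ x → z ≠ y → γ₂ z = γ z := by
    intro z h1 h2; rw [hγ₂def]; simp only [hex3 z h1 h2]
  have hγ₂K : ∀ z, γ₂ z < K := fun z => hγK _
  -- shape preserved
  have hsh₂ : ∀ j : ℕ, ((univ : Finset (Fin n)).filter fun z => β z < j).card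
      = ((univ : Finset (Fin n)).filter fun z => γ₂ z < j).card := by
    intro j
    rw [hsh j]
    exact (card_filter_comp_equiv (P := fun z => γ z < j) (Equiv.swap x y)).symm
  -- cnt relations
  have hcnt_eq : ∀ j v : ℕ, ¬(γ x < j ∧ j ≤ γ y ∧ (x : ℕ) ≤ v ∧ v < (y : ℕ)) →
      cnt n γ₂ j v = cnt n γ j v := by
    intro j v hnot
    unfold cnt
    by_cases hvx : v < (x : ℕ)
    · congr 1
      apply filter_congr
      intro z _
      by_cases hz : (z : ℕ) ≤ v
      · have h1 : z ≠ x := by intro h; subst h; omega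
        have h2 : z ≠ y := by intro h; subst h; omega
        simp [hz, hγ₂z z h1 h2]
      · simp [hz]
    · by_cases hvy : (y : ℕ) ≤ v
      · have hswle : ∀ w : Fin n, (w : ℕ) ≤ v → ((Equiv.swap x y w : Fin n) : ℕ) ≤ v := by
          intro w hw
          by_cases h1 : w = x
          · subst h1; rw [hex1]; omega
          · by_cases h2 : w = y
            · subst h2; rw [hex2]; omega
            · rw [hex3 w h1 h2]; exact hw
        apply Finset.card_bij' (fun z _ => Equiv.swap x y z) (fun z _ => Equiv.swap x y z)
        · intro a ha
          simp only [mem_filter, mem_univ, true_and] at ha ⊢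
          exact ⟨hswle a ha.1, ha.2⟩
        · intro a ha
          simp only [mem_filter, mem_univ, true_and] at ha ⊢
          refine ⟨hswle a ha.1, ?_⟩
          rw [hγ₂def]
          simpa using ha.2
        · intro a _; simp
        · intro a _; simp
      · have hj : j ≤ γ x ∨ γ y < j := by omega
        congr 1
        apply filter_congr
        intro z _
        by_cases hz : (z : ℕ) ≤ v
        · have h2 : z ≠ y := by intro h; subst h; omega
          by_cases h1 : z = x
          · subst h1
            rcases hj with hj | hj
            · simp only [hz, true_and, hγ₂x]
              constructor <;> (intro hh; omega)
            · simp only [hz, true_and, hγ₂x]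
              constructor <;> (intro hh; omega)
          · simp [hz, hγ₂z z h1 h2]
        · simp [hz]
  have hcnt_lt : ∀ j v : ℕ, (γ x < j ∧ j ≤ γ y ∧ (x : ℕ) ≤ v ∧ v < (y : ℕ)) →
      cnt n γ₂ j v + 1 = cnt n γ j v := by
    intro j v hcond
    obtain ⟨h1, h2, h3, h4⟩ := hcond
    unfold cnt
    have hxmem : x ∈ ((univ : Finset (Fin n)).filter
        fun z : Fin n => (z : ℕ) ≤ v ∧ γ z < j) := by
      simp only [mem_filter, mem_univ, true_and]
      exact ⟨h3, by omega⟩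
    have hseteq : ((univ : Finset (Fin n)).filter fun z : Fin n => (z : ℕ) ≤ v ∧ γ₂ z < j)
        = (((univ : Finset (Fin n)).filter fun z : Fin n => (z : ℕ) ≤ v ∧ γ z < j).erase x) := by
      ext z
      simp only [mem_filter, mem_univ, true_and, mem_erase]
      by_cases hzx : z = x
      · subst hzx
        rw [hγ₂x]
        constructor
        · rintro ⟨_, hh⟩; omega
        · rintro ⟨hh, _⟩; exact absurd rfl hh
      · by_cases hzy : z = y
        · subst hzy
          constructor
          · rintro ⟨hh, _⟩; omega
          · rintro ⟨_, hh, _⟩; omega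
        · rw [hγ₂z z hzx hzy]
          exact ⟨fun hh => ⟨hzx, hh⟩, fun hh => hh.2⟩
    rw [hseteq, Finset.card_erase_of_mem hxmem]
    have := Finset.card_pos.2 ⟨x, hxmem⟩
    omega
  have hstrictdom : ∀ j v : ℕ, (γ x < j ∧ j ≤ γ y ∧ (x : ℕ) ≤ v ∧ v < (y : ℕ)) →
      cnt n β j v < cnt n γ j v := by
    intro j v hcond
    obtain ⟨h1, h2, h3, h4⟩ := hcond
    have hxmem : x ∈ ((univ : Finset (Fin n)).filter
        fun z : Fin n => (z : ℕ) ≤ v ∧ γ z < j) := by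
      simp only [mem_filter, mem_univ, true_and]; exact ⟨h3, by omega⟩
    have hxnot : x ∉ ((univ : Finset (Fin n)).filter
        fun z : Fin n => (z : ℕ) ≤ v ∧ β z < j) := by
      simp only [mem_filter, mem_univ, true_and]
      rintro ⟨_, hh⟩; omega
    exact Finset.card_lt_card ⟨hsub j v h4, fun hcon => hxnot (hcon hxmem)⟩
  have hdom₂ : ∀ j v : ℕ, cnt n β j v ≤ cnt n γ₂ j v := by
    intro j v
    by_cases hcond : (γ x < j ∧ j ≤ γ y ∧ (x : ℕ) ≤ v ∧ v < (y : ℕ))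
    · have := hcnt_lt j v hcond
      have := hstrictdom j v hcond
      omega
    · rw [hcnt_eq j v hcond]; exact hdom j v
  have hle₂ : ∀ j v : ℕ, cnt n γ₂ j v ≤ cnt n γ j v := by
    intro j v
    by_cases hcond : (γ x < j ∧ j ≤ γ y ∧ (x : ℕ) ≤ v ∧ v < (y : ℕ))
    · have := hcnt_lt j v hcond; omega
    · rw [hcnt_eq j v hcond]
  -- length increases strictly
  have hlen : lenF n γ < lenF n γ₂ := by
    have hrw : lenF n γ₂ = ∑ a : Fin n, ∑ b : Fin n,
        (if Equiv.swap x y a < Equiv.swap x y b ∧ γ b < γ a then 1 else 0) := by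
      rw [lenF_eq_sum]
      rw [← Equiv.sum_comp (Equiv.swap x y)
        (fun a => ∑ b : Fin n, if a < b ∧ γ₂ b < γ₂ a then (1:ℕ) else 0)]
      apply Finset.sum_congr rfl
      intro a _
      rw [← Equiv.sum_comp (Equiv.swap x y)
        (fun b => if Equiv.swap x y a < b ∧ γ₂ b < γ₂ (Equiv.swap x y a) then (1:ℕ) else 0)]
      apply Finset.sum_congr rfl
      intro b _
      have h1 : γ₂ (Equiv.swap x y b) = γ b := by rw [hγ₂def]; simp
      have h2 : γ₂ (Equiv.swap x y a) = γ a := by rw [hγ₂def]; simp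
      rw [h1, h2]
    rw [hrw, lenF_eq_sum]
    have hfilt : (univ : Finset (Fin n)).filter (fun a => a = x ∨ a = y) = {x, y} := by
      ext a; simp [mem_insert]
    rw [← Finset.sum_filter_add_sum_filter_not univ (fun a => a = x ∨ a = y),
        ← Finset.sum_filter_add_sum_filter_not univ (fun a => a = x ∨ a = y)
          (f := fun a => ∑ b : Fin n,
            (if Equiv.swap x y a < Equiv.swap x y b ∧ γ b < γ a then (1:ℕ) else 0))]
    have hA : ∑ a ∈ (univ : Finset (Fin n)).filter (fun a => a = x ∨ a = y),
          (∑ b : Fin n, if a < b ∧ γ b < γ a then (1:ℕ) else 0)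
        < ∑ a ∈ (univ : Finset (Fin n)).filter (fun a => a = x ∨ a = y),
          (∑ b : Fin n, if Equiv.swap x y a < Equiv.swap x y b ∧ γ b < γ a then 1 else 0) := by
      rw [hfilt, Finset.sum_pair hxny, Finset.sum_pair hxny,
        ← Finset.sum_add_distrib, ← Finset.sum_add_distrib]
      apply Finset.sum_lt_sum
      · intro b _
        by_cases hbx : b = x
        · subst hbx
          rw [hex1, hex2]
          simp only [Fin.lt_def]
          split_ifs <;> omega
        · by_cases hby : b = y
          · subst hby
            rw [hex1, hex2]
            simp only [Fin.lt_def]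
            split_ifs <;> omega
          · rw [hex1, hex2, hex3 b hbx hby]
            simp only [Fin.lt_def]
            split_ifs <;> omega
      · refine ⟨x, mem_univ x, ?_⟩
        rw [hex1, hex2]
        simp only [Fin.lt_def]
        split_ifs <;> omega
    have hB : ∑ a ∈ (univ : Finset (Fin n)).filter (fun a => ¬(a = x ∨ a = y)),
          (∑ b : Fin n, if a < b ∧ γ b < γ a then (1:ℕ) else 0)
        ≤ ∑ a ∈ (univ : Finset (Fin n)).filter (fun a => ¬(a = x ∨ a = y)),
          (∑ b : Fin n, if Equiv.swap x y a < Equiv.swap x y b ∧ γ b < γ a then 1 else 0) := by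
      apply Finset.sum_le_sum
      intro a ha
      simp only [mem_filter, mem_univ, true_and, not_or] at ha
      obtain ⟨hax, hay⟩ := ha
      rw [← Finset.sum_filter_add_sum_filter_not univ (fun b => b = x ∨ b = y),
        ← Finset.sum_filter_add_sum_filter_not univ (fun b => b = x ∨ b = y)
          (f := fun b => if Equiv.swap x y a < Equiv.swap x y b ∧ γ b < γ a then (1:ℕ) else 0)]
      have h1 : ∑ b ∈ (univ : Finset (Fin n)).filter (fun b => b = x ∨ b = y),
            (if a < b ∧ γ b < γ a then (1:ℕ) else 0)
          ≤ ∑ b ∈ (univ : Finset (Fin n)).filter (fun b => b = x ∨ b = y),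
            (if Equiv.swap x y a < Equiv.swap x y b ∧ γ b < γ a then 1 else 0) := by
        rw [hfilt, Finset.sum_pair hxny, Finset.sum_pair hxny, hex1, hex2,
          hex3 a hax hay]
        simp only [Fin.lt_def]
        split_ifs <;> omega
      have h2 : ∑ b ∈ (univ : Finset (Fin n)).filter (fun b => ¬(b = x ∨ b = y)),
            (if a < b ∧ γ b < γ a then (1:ℕ) else 0)
          = ∑ b ∈ (univ : Finset (Fin n)).filter (fun b => ¬(b = x ∨ b = y)),
            (if Equiv.swap x y a < Equiv.swap x y b ∧ γ b < γ a then 1 else 0) := by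
        apply Finset.sum_congr rfl
        intro b hb
        simp only [mem_filter, mem_univ, true_and, not_or] at hb
        rw [hex3 a hax hay, hex3 b hb.1 hb.2]
      omega
    omega
  -- measure decreases; conclude
  by_cases hβγ₂ : β = γ₂
  · rw [hβγ₂]; exact hlen
  · have hd₂lt : (∑ jv ∈ Finset.range (K + 1) ×ˢ Finset.range n,
        (cnt n γ₂ jv.1 jv.2 - cnt n β jv.1 jv.2)) < d := by
      rw [← hD]
      apply Finset.sum_lt_sum
      · intro jv _
        have := hle₂ jv.1 jv.2
        have := hdom₂ jv.1 jv.2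
        omega
      · refine ⟨(γ y, (x : ℕ)), ?_, ?_⟩
        · simp only [Finset.mem_product, Finset.mem_range]
          exact ⟨by have := hγK y; omega, x.isLt⟩
        · have hc := hcnt_lt (γ y) (x : ℕ) ⟨hγx, le_refl _, le_refl _, hxyv⟩
          have h5 := hdom₂ (γ y) (x : ℕ)
          simp only []
          omega
    exact lt_trans hlen (IH _ hd₂lt β γ₂ hγ₂K hsh₂ hdom₂ hβγ₂ rfl)

end WFS
namespace WFS
open Finset

variable {N n : ℕ} {lam : Fin N → ℕ} {I J : Fin N → Finset (Fin n)}
  {σ : Fin N → Equiv.Perm (Fin n)}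

/-- the index permutation hidden in `permT`. -/
def sigP (N n : ℕ) (σ : Fin N → Equiv.Perm (Fin n)) (j a : ℕ) : ℕ :=
  if h : 1 ≤ j ∧ j ≤ N - 1 ∧ a < n then
    ((σ ⟨j - 1, by omega⟩) ⟨a, h.2.2⟩ : Fin n) else a

/-- the value substituted for `t^{(j)}_a` under `permT σ (SigT I z)`. -/
def Vv (N n : ℕ) (I : Fin N → Finset (Fin n)) (σ : Fin N → Equiv.Perm (Fin n))
    (j a : ℕ) : ℕ :=
  if j = N then a else idx N n I j (sigP N n σ j a)

lemma permT_eq_sigP (σ : Fin N → Equiv.Perm (Fin n)) (t : ℕ → ℕ → ℂ) (j a : ℕ) :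
    permT N n σ t j a = t j (sigP N n σ j a) := by
  unfold permT sigP
  by_cases h : 1 ≤ j ∧ j ≤ N - 1 ∧ a < n
  · rw [dif_pos h, dif_pos h]
  · rw [dif_neg h, dif_neg h]

lemma TT_permT_SigT (I : Fin N → Finset (Fin n)) (σ : Fin N → Equiv.Perm (Fin n))
    (z : Fin n → ℂ) (j a : ℕ) :
    TT N n (permT N n σ (SigT N n I z)) z j a = zf n z (Vv N n I σ j a) := by
  unfold TT Vv
  by_cases h : j = N
  · rw [if_pos h, if_pos h]
  · rw [if_neg h, if_neg h, permT_eq_sigP]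
    rfl

lemma mem_symSet_iff :
    σ ∈ symSet N n lam ↔ ∀ k : Fin N, ∀ a : Fin n,
      ((k : ℕ) + 1 = N ∨ Lam N lam ((k : ℕ) + 1) ≤ (a : ℕ)) → σ k a = a := by
  unfold symSet
  simp only [mem_filter, mem_univ, true_and]

lemma sigP_lt (hσ : σ ∈ symSet N n lam) {j a : ℕ}
    (h1 : 1 ≤ j) (h2 : j ≤ N - 1) (hn' : Lam N lam j ≤ n) (ha : a < Lam N lam j) :
    sigP N n σ j a < Lam N lam j := by
  have hfix := mem_symSet_iff.1 hσ
  have hcond : 1 ≤ j ∧ j ≤ N - 1 ∧ a < n := ⟨h1, h2, by omega⟩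
  unfold sigP
  rw [dif_pos hcond]
  set k : Fin N := ⟨j - 1, by omega⟩ with hk
  have hk1 : (k : ℕ) + 1 = j := by rw [hk]; simp; omega
  by_contra hcon
  push_neg at hcon
  have h5 : σ k (σ k ⟨a, hcond.2.2⟩) = σ k ⟨a, hcond.2.2⟩ := by
    apply hfix
    right
    rw [hk1]
    exact hcon
  have h6 : σ k ⟨a, hcond.2.2⟩ = ⟨a, hcond.2.2⟩ := (σ k).injective h5
  rw [h6] at hcon
  simp at hcon
  omega

lemma sigP_surj (hσ : σ ∈ symSet N n lam) {j b : ℕ}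
    (h1 : 1 ≤ j) (h2 : j ≤ N - 1) (hn' : Lam N lam j ≤ n) (hb : b < Lam N lam j) :
    ∃ a, a < Lam N lam j ∧ sigP N n σ j a = b := by
  have hfix := mem_symSet_iff.1 hσ
  set k : Fin N := ⟨j - 1, by omega⟩ with hk
  have hk1 : (k : ℕ) + 1 = j := by rw [hk]; simp; omega
  have hbn : b < n := by omega
  obtain ⟨a, hadef⟩ : ∃ a : Fin n, a = (σ k)⁻¹ ⟨b, hbn⟩ := ⟨_, rfl⟩
  have haLam : (a : ℕ) < Lam N lam j := by
    by_contra hcon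
    push_neg at hcon
    have h5 : σ k a = a := hfix k a (Or.inr (by rw [hk1]; exact hcon))
    have h6 : σ k a = ⟨b, hbn⟩ := by rw [hadef]; simp
    rw [h5] at h6
    rw [h6] at hcon
    simp at hcon
    omega
  refine ⟨(a : ℕ), haLam, ?_⟩
  have hcond : 1 ≤ j ∧ j ≤ N - 1 ∧ (a : ℕ) < n := ⟨h1, h2, a.isLt⟩
  unfold sigP
  rw [dif_pos hcond]
  show ((σ k) ⟨(a : ℕ), hcond.2.2⟩ : Fin n).val = b
  have ha2 : (⟨(a : ℕ), hcond.2.2⟩ : Fin n) = a := rfl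
  rw [ha2, hadef]
  simp

lemma sigP_inj (hσ : σ ∈ symSet N n lam) {j a a' : ℕ}
    (h1 : 1 ≤ j) (h2 : j ≤ N - 1) (hn' : Lam N lam j ≤ n)
    (ha : a < Lam N lam j) (ha' : a' < Lam N lam j)
    (heq : sigP N n σ j a = sigP N n σ j a') : a = a' := by
  have hcond : 1 ≤ j ∧ j ≤ N - 1 ∧ a < n := ⟨h1, h2, by omega⟩
  have hcond' : 1 ≤ j ∧ j ≤ N - 1 ∧ a' < n := ⟨h1, h2, by omega⟩
  unfold sigP at heq
  rw [dif_pos hcond, dif_pos hcond'] at heq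
  have h5 := (σ _).injective (Fin.val_injective heq)
  have := congrArg Fin.val h5
  simpa using this

lemma cupI_mono (I : Fin N → Finset (Fin n)) {j j' : ℕ} (h : j ≤ j') :
    cupI N n I j ⊆ cupI N n I j' := by
  unfold cupI
  intro x hx
  rw [mem_biUnion] at hx ⊢
  obtain ⟨k, hk, hxk⟩ := hx
  simp only [mem_filter, mem_univ, true_and] at hk
  exact ⟨k, by simp only [mem_filter, mem_univ, true_and]; omega, hxk⟩

lemma Vv_lt_n (hI : IsLamPartition N n lam I) (hlam : ∑ j, lam j = n)
    (hσ : σ ∈ symSet N n lam) {j a : ℕ} (h1 : 1 ≤ j) (h2 : j ≤ N)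
    (ha : a < Lam N lam j) : Vv N n I σ j a < n := by
  unfold Vv
  by_cases h : j = N
  · rw [if_pos h]; subst h; have := Lam_N (lam := lam) hlam; omega
  · rw [if_neg h]
    have h2' : j ≤ N - 1 := by omega
    exact idx_lt_n hI (sigP_lt hσ h1 h2' (Lam_le_n hlam j (by omega)) ha)

/-- step: each level-`j` value appears among the level-`j+1` values. -/
lemma Vv_step (hI : IsLamPartition N n lam I) (hlam : ∑ j, lam j = n)
    (hσ : σ ∈ symSet N n lam) {j a : ℕ} (h1 : 1 ≤ j) (h2 : j + 1 ≤ N)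
    (ha : a < Lam N lam j) :
    ∃ c, c < Lam N lam (j + 1) ∧ Vv N n I σ (j + 1) c = Vv N n I σ j a := by
  have hjN : j ≠ N := by omega
  have h2' : j ≤ N - 1 := by omega
  have hlamj : Lam N lam j ≤ n := Lam_le_n hlam j (by omega)
  have hsp := sigP_lt hσ h1 h2' hlamj ha
  obtain ⟨x, hxmem, hxval⟩ := idx_spec hI (j := j) hsp
  have hVj : Vv N n I σ j a = (x : ℕ) := by
    unfold Vv; rw [if_neg hjN]; exact hxval
  by_cases hc : j + 1 = N
  · refine ⟨(x : ℕ), ?_, ?_⟩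
    · rw [hc, Lam_N hlam]; exact x.isLt
    · rw [hVj]; unfold Vv; rw [if_pos hc]
  · have hx' : x ∈ cupI N n I (j + 1) := cupI_mono I (by omega) hxmem
    obtain ⟨a', ha', hval'⟩ := idx_surj hI hx'
    obtain ⟨c, hc1, hc2⟩ := sigP_surj hσ (j := j + 1) (by omega) (by omega)
      (Lam_le_n hlam (j + 1) (by omega)) ha'
    refine ⟨c, hc1, ?_⟩
    rw [hVj]
    unfold Vv
    rw [if_neg hc, hc2, hval']

/-- if no violating factor exists, the chain inequality holds. -/
lemma chain_ineq (hI : IsLamPartition N n lam I) (hJ : IsLamPartition N n lam J)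
    (hlam : ∑ j, lam j = n) (hσ : σ ∈ symSet N n lam)
    (hnv : ∀ j, 1 ≤ j → j ≤ N - 1 → ∀ a, a < Lam N lam j → ∀ c, c < Lam N lam (j + 1) →
      Vv N n I σ j a = Vv N n I σ (j + 1) c → idx N n J j a ≤ idx N n J (j + 1) c) :
    ∀ m j a, j + m = N → 1 ≤ j → a < Lam N lam j →
      idx N n J j a ≤ Vv N n I σ j a := by
  intro m
  induction m with
  | zero =>
    intro j a hjm h1 ha
    have hj : j = N := by omega
    subst hj
    have han : a < n := by have := Lam_N (lam := lam) hlam; omega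
    unfold Vv
    rw [if_pos rfl, idx_N_eq hJ hlam han]
  | succ m ih =>
    intro j a hjm h1 ha
    obtain ⟨c, hc1, hc2⟩ := Vv_step hI hlam hσ h1 (by omega) ha
    have step := hnv j h1 (by omega) a ha c hc1 hc2.symm
    have hrec := ih (j + 1) c (by omega) (by omega) hc1
    omega

/-- a violating factor kills the summand. -/
lemma Ufun_eq_zero (lam : Fin N → ℕ) (I J : Fin N → Finset (Fin n))
    (σ : Fin N → Equiv.Perm (Fin n)) (z : Fin n → ℂ) (h : ℂ) {j₀ a₀ c₀ : ℕ}
    (hj : 1 ≤ j₀ ∧ j₀ ≤ N - 1) (ha : a₀ < Lam N lam j₀) (hc : c₀ < Lam N lam (j₀ + 1))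
    (heq : Vv N n I σ j₀ a₀ = Vv N n I σ (j₀ + 1) c₀)
    (hlt : idx N n J (j₀ + 1) c₀ < idx N n J j₀ a₀) :
    Ufun N n lam J (permT N n σ (SigT N n I z)) z h = 0 := by
  unfold Ufun
  refine Finset.prod_eq_zero (Finset.mem_Icc.2 hj) ?_
  refine Finset.prod_eq_zero (Finset.mem_range.2 ha) ?_
  apply mul_eq_zero_of_left
  refine Finset.prod_eq_zero (Finset.mem_range.2 hc) ?_
  apply mul_eq_zero_of_left
  rw [if_pos hlt, TT_permT_SigT, TT_permT_SigT, heq, sub_self]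

end WFS
namespace WFS
open Finset

variable {N n : ℕ} {lam : Fin N → ℕ} {I J : Fin N → Finset (Fin n)}
  {σ : Fin N → Equiv.Perm (Fin n)}

lemma idx_inj (hI : IsLamPartition N n lam I) {j a a' : ℕ}
    (ha : a < Lam N lam j) (ha' : a' < Lam N lam j)
    (heq : idx N n I j a = idx N n I j a') : a = a' := by
  rcases lt_trichotomy a a' with h | h | h
  · exact absurd heq (Nat.ne_of_lt (idx_strictMono hI h ha'))
  · exact h
  · exact absurd heq.symm (Nat.ne_of_lt (idx_strictMono hI h ha))

lemma cnt_blk (hI : IsLamPartition N n lam I) (b : Fin n → Fin N)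
    (hb1 : ∀ a, a ∈ I (b a)) (hb2 : ∀ (a : Fin n) k, a ∈ I k → k = b a)
    {j : ℕ} (v : ℕ) :
    cnt n (fun s => ((b s : ℕ))) j v
      = ((Finset.range (Lam N lam j)).filter (fun a => idx N n I j a ≤ v)).card := by
  unfold cnt
  symm
  apply Finset.card_bij (i := fun (a : ℕ) (ha : a ∈ (Finset.range (Lam N lam j)).filter
    (fun a => idx N n I j a ≤ v)) =>
      (⟨idx N n I j a, idx_lt_n hI (by simpa using (Finset.mem_filter.1 ha).1)⟩ : Fin n))
  · intro a ha
    have ha1 : a < Lam N lam j := by simpa using (Finset.mem_filter.1 ha).1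
    have ha2 : idx N n I j a ≤ v := (Finset.mem_filter.1 ha).2
    simp only [mem_filter, mem_univ, true_and]
    refine ⟨ha2, ?_⟩
    obtain ⟨x, hxmem, hxval⟩ := idx_spec hI ha1
    have hmem : (⟨idx N n I j a, idx_lt_n hI ha1⟩ : Fin n) ∈ cupI N n I j := by
      have hx2 : (⟨idx N n I j a, idx_lt_n hI ha1⟩ : Fin n) = x := Fin.ext hxval
      rw [hx2]; exact hxmem
    exact (mem_cupI b hb1 hb2).1 hmem
  · intro a₁ ha₁ a₂ ha₂ heq
    have h1 : a₁ < Lam N lam j := by simpa using (Finset.mem_filter.1 ha₁).1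
    have h2 : a₂ < Lam N lam j := by simpa using (Finset.mem_filter.1 ha₂).1
    exact idx_inj hI h1 h2 (congrArg Fin.val heq)
  · intro s hs
    simp only [mem_filter, mem_univ, true_and] at hs
    have hcup : s ∈ cupI N n I j := (mem_cupI b hb1 hb2).2 hs.2
    obtain ⟨a, haL, haval⟩ := idx_surj hI hcup
    refine ⟨a, ?_, ?_⟩
    · simp only [mem_filter, Finset.mem_range]
      exact ⟨haL, by rw [haval]; exact hs.1⟩
    · exact Fin.ext (by simpa using haval)

lemma cnt_pos_perm (hσ : σ ∈ symSet N n lam) {j : ℕ}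
    (h1 : 1 ≤ j) (h2 : j ≤ N - 1) (hn' : Lam N lam j ≤ n) (v : ℕ)
    (I : Fin N → Finset (Fin n)) :
    ((Finset.range (Lam N lam j)).filter
        (fun a => idx N n I j (sigP N n σ j a) ≤ v)).card
      = ((Finset.range (Lam N lam j)).filter (fun a => idx N n I j a ≤ v)).card := by
  apply Finset.card_bij (i := fun a _ => sigP N n σ j a)
  · intro a ha
    simp only [mem_filter, Finset.mem_range] at ha ⊢
    exact ⟨sigP_lt hσ h1 h2 hn' ha.1, ha.2⟩
  · intro a₁ ha₁ a₂ ha₂ heq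
    simp only [mem_filter, Finset.mem_range] at ha₁ ha₂
    exact sigP_inj hσ h1 h2 hn' ha₁.1 ha₂.1 heq
  · intro b hb
    simp only [mem_filter, Finset.mem_range] at hb
    obtain ⟨a, haL, haeq⟩ := sigP_surj hσ h1 h2 hn' hb.1
    refine ⟨a, ?_, haeq⟩
    simp only [mem_filter, Finset.mem_range]
    exact ⟨haL, by rw [haeq]; exact hb.2⟩

lemma lenI_eq_lenF (I : Fin N → Finset (Fin n)) (b : Fin n → Fin N)
    (hb1 : ∀ a, a ∈ I (b a)) (hb2 : ∀ (a : Fin n) k, a ∈ I k → k = b a) :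
    lenI N n I = lenF n (fun s => ((b s : ℕ))) := by
  unfold lenI lenF
  congr 1
  apply filter_congr
  intro p _
  constructor
  · rintro ⟨i, jj, hji, h1, h2, hlt⟩
    refine ⟨hlt, ?_⟩
    have e1 : i = b p.1 := hb2 p.1 i h1
    have e2 : jj = b p.2 := hb2 p.2 jj h2
    subst e1; subst e2
    exact hji
  · rintro ⟨hlt, hval⟩
    exact ⟨b p.1, b p.2, Fin.lt_def.2 hval, hb1 _, hb1 _, hlt⟩

/-- Part 1 of the theorem. -/
lemma part1 (N n : ℕ) (hN : 1 ≤ N) (hn : 1 ≤ n) (lam : Fin N → ℕ)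
    (hlam : ∑ j, lam j = n) (I J : Fin N → Finset (Fin n))
    (hI : IsLamPartition N n lam I) (hJ : IsLamPartition N n lam J)
    (hne : I ≠ J) (hlen : lenI N n I ≤ lenI N n J) (z : Fin n → ℂ) (h : ℂ) :
    W N n lam J (SigT N n I z) z h = 0 := by
  classical
  unfold W
  apply Finset.sum_eq_zero
  intro σ hσ
  by_cases hviol : ∃ j, (1 ≤ j ∧ j ≤ N - 1) ∧ ∃ a, a < Lam N lam j ∧
      ∃ c, c < Lam N lam (j + 1) ∧ Vv N n I σ j a = Vv N n I σ (j + 1) c ∧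
        idx N n J (j + 1) c < idx N n J j a
  · obtain ⟨j, ⟨hj1, hj2⟩, a, ha, c, hc, heq, hlt⟩ := hviol
    exact Ufun_eq_zero lam I J σ z h ⟨hj1, hj2⟩ ha hc heq hlt
  · exfalso
    have hnv : ∀ j, 1 ≤ j → j ≤ N - 1 → ∀ a, a < Lam N lam j →
        ∀ c, c < Lam N lam (j + 1) → Vv N n I σ j a = Vv N n I σ (j + 1) c →
          idx N n J j a ≤ idx N n J (j + 1) c := by
      intro j hj1 hj2 a ha c hc heq
      by_contra hcon
      push_neg at hcon
      exact hviol ⟨j, ⟨hj1, hj2⟩, a, ha, c, hc, heq, hcon⟩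
    have hchain : ∀ j a, 1 ≤ j → j ≤ N → a < Lam N lam j →
        idx N n J j a ≤ Vv N n I σ j a := by
      intro j a hj1 hj2 ha
      exact chain_ineq hI hJ hlam hσ hnv (N - j) j a (by omega) hj1 ha
    obtain ⟨bI, hbI1⟩ := Classical.axiom_of_choice (fun a : Fin n => (hI.2 a).exists)
    have hbI2 : ∀ (a : Fin n) k, a ∈ I k → k = bI a :=
      fun a k hk => (hI.2 a).unique hk (hbI1 a)
    obtain ⟨bJ, hbJ1⟩ := Classical.axiom_of_choice (fun a : Fin n => (hJ.2 a).exists)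
    have hbJ2 : ∀ (a : Fin n) k, a ∈ J k → k = bJ a :=
      fun a k hk => (hJ.2 a).unique hk (hbJ1 a)
    set β : Fin n → ℕ := fun s => ((bI s : ℕ)) with hβdef
    set γ : Fin n → ℕ := fun s => ((bJ s : ℕ)) with hγdef
    have hβγne : β ≠ γ := by
      intro hcon
      apply hne
      funext k
      ext x
      have hbeq : bI x = bJ x := Fin.ext (congrFun hcon x)
      constructor
      · intro hx
        rw [← hbI2 x k hx, hbeq] at *
        exact hbJ1 x
      · intro hx
        rw [← hbJ2 x k hx, ← hbeq] at *
        exact hbI1 x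
    have hfiltI : ∀ j : ℕ, ((univ : Finset (Fin n)).filter fun s => β s < j)
        = cupI N n I j := by
      intro j
      ext x
      simp only [mem_filter, mem_univ, true_and]
      exact ((mem_cupI bI hbI1 hbI2).symm : _)
    have hfiltJ : ∀ j : ℕ, ((univ : Finset (Fin n)).filter fun s => γ s < j)
        = cupI N n J j := by
      intro j
      ext x
      simp only [mem_filter, mem_univ, true_and]
      exact ((mem_cupI bJ hbJ1 hbJ2).symm : _)
    have hsh : ∀ j : ℕ, ((univ : Finset (Fin n)).filter fun s => β s < j).card
        = ((univ : Finset (Fin n)).filter fun s => γ s < j).card := by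
      intro j
      rw [hfiltI, hfiltJ, card_cupI bI hbI1 hbI2 hI, card_cupI bJ hbJ1 hbJ2 hJ]
    have hdom : ∀ j v : ℕ, cnt n β j v ≤ cnt n γ j v := by
      intro j v
      by_cases hj0 : j = 0
      · subst hj0
        have : cnt n β 0 v = 0 := by
          unfold cnt
          rw [Finset.card_eq_zero, Finset.filter_eq_empty_iff]
          intro s _
          simp
        omega
      · by_cases hjN : N ≤ j
        · have heq : cnt n β j v = cnt n γ j v := by
            unfold cnt
            congr 1
            apply filter_congr
            intro s _
            have h1 : β s < j := by
              have := (bI s).isLt; rw [hβdef]; simp only []; omega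
            have h2 : γ s < j := by
              have := (bJ s).isLt; rw [hγdef]; simp only []; omega
            simp [h1, h2]
          omega
        · have hj1 : 1 ≤ j := by omega
          have hj2 : j ≤ N - 1 := by omega
          have hjn : j ≠ N := by omega
          have hlamj : Lam N lam j ≤ n := Lam_le_n hlam j (by omega)
          have e1 : cnt n β j v
              = ((Finset.range (Lam N lam j)).filter
                  (fun a => idx N n I j a ≤ v)).card := cnt_blk hI bI hbI1 hbI2 v
          have e2 : cnt n γ j v
              = ((Finset.range (Lam N lam j)).filter
                  (fun a => idx N n J j a ≤ v)).card := cnt_blk hJ bJ hbJ1 hbJ2 v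
          rw [e1, e2, ← cnt_pos_perm hσ hj1 hj2 hlamj v I]
          apply Finset.card_le_card
          intro a ha
          simp only [mem_filter, Finset.mem_range] at ha ⊢
          refine ⟨ha.1, ?_⟩
          have hch := hchain j a hj1 (by omega) ha.1
          have hVv : Vv N n I σ j a = idx N n I j (sigP N n σ j a) := by
            unfold Vv; rw [if_neg hjn]
          omega
    have hγK : ∀ s, γ s < N := fun s => (bJ s).isLt
    have hcore := core_lemma n N _ β γ hγK hsh hdom hβγne rfl
    rw [← lenI_eq_lenF I bI hbI1 hbI2, ← lenI_eq_lenF J bJ hbJ1 hbJ2] at hcore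
    omega

end WFS
namespace WFS
open Finset

variable {N n : ℕ} {lam : Fin N → ℕ} {I : Fin N → Finset (Fin n)}
  {σ : Fin N → Equiv.Perm (Fin n)}

lemma one_mem_symSet : (fun _ : Fin N => (1 : Equiv.Perm (Fin n))) ∈ symSet N n lam := by
  rw [mem_symSet_iff]
  intro k a _
  rfl

lemma permT_one (t : ℕ → ℕ → ℂ) :
    permT N n (fun _ : Fin N => (1 : Equiv.Perm (Fin n))) t = t := by
  funext j a
  unfold permT
  by_cases hc : 1 ≤ j ∧ j ≤ N - 1 ∧ a < n
  · rw [dif_pos hc]; rfl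
  · rw [dif_neg hc]


lemma sigP_of_nonviol (hI : IsLamPartition N n lam I) (hlam : ∑ j, lam j = n)
    (hσ : σ ∈ symSet N n lam)
    (hnv : ∀ j, 1 ≤ j → j ≤ N - 1 → ∀ a, a < Lam N lam j →
      ∀ c, c < Lam N lam (j + 1) → Vv N n I σ j a = Vv N n I σ (j + 1) c →
        idx N n I j a ≤ idx N n I (j + 1) c) :
    σ = fun _ : Fin N => (1 : Equiv.Perm (Fin n)) := by
  classical
  have hchain : ∀ j a, 1 ≤ j → j ≤ N → a < Lam N lam j →
      idx N n I j a ≤ Vv N n I σ j a := by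
    intro j a hj1 hj2 ha
    exact chain_ineq hI hI hlam hσ hnv (N - j) j a (by omega) hj1 ha
  have hpoint : ∀ j, 1 ≤ j → j ≤ N - 1 → ∀ a ∈ Finset.range (Lam N lam j),
      idx N n I j a = idx N n I j (sigP N n σ j a) := by
    intro j hj1 hj2
    have hjn : j ≠ N := by omega
    have hlamj : Lam N lam j ≤ n := Lam_le_n hlam j (by omega)
    have hsum : ∑ a ∈ Finset.range (Lam N lam j), idx N n I j a
        = ∑ a ∈ Finset.range (Lam N lam j), idx N n I j (sigP N n σ j a) := by
      symm
      apply Finset.sum_bij (i := fun a _ => sigP N n σ j a)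
      · intro a ha
        simp only [Finset.mem_range] at ha ⊢
        exact sigP_lt hσ hj1 hj2 hlamj ha
      · intro a₁ ha₁ a₂ ha₂ heq
        simp only [Finset.mem_range] at ha₁ ha₂
        exact sigP_inj hσ hj1 hj2 hlamj ha₁ ha₂ heq
      · intro b hb
        simp only [Finset.mem_range] at hb
        obtain ⟨a, haL, haeq⟩ := sigP_surj hσ hj1 hj2 hlamj hb
        exact ⟨a, Finset.mem_range.2 haL, haeq⟩
      · intro a _
        rfl
    have hle : ∀ a ∈ Finset.range (Lam N lam j),
        idx N n I j a ≤ idx N n I j (sigP N n σ j a) := by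
      intro a ha
      simp only [Finset.mem_range] at ha
      have := hchain j a hj1 (by omega) ha
      have hVv : Vv N n I σ j a = idx N n I j (sigP N n σ j a) := by
        unfold Vv; rw [if_neg hjn]
      omega
    exact (Finset.sum_eq_sum_iff_of_le hle).1 hsum
  funext k
  apply Equiv.ext
  intro a
  have hfix := mem_symSet_iff.1 hσ
  by_cases hk : (k : ℕ) + 1 = N
  · exact hfix k a (Or.inl hk)
  · have hk2 : (k : ℕ) + 1 ≤ N - 1 := by have := k.isLt; omega
    by_cases ha : Lam N lam ((k : ℕ) + 1) ≤ (a : ℕ)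
    · exact hfix k a (Or.inr ha)
    · push_neg at ha
      have hj1 : 1 ≤ (k : ℕ) + 1 := by omega
      have hlamj : Lam N lam ((k : ℕ) + 1) ≤ n := Lam_le_n hlam _ (by omega)
      have hval := hpoint ((k : ℕ) + 1) hj1 hk2 (a : ℕ) (Finset.mem_range.2 ha)
      have hsig : sigP N n σ ((k : ℕ) + 1) (a : ℕ) = (a : ℕ) :=
        (idx_inj hI (sigP_lt hσ hj1 hk2 hlamj ha) ha hval.symm).symm ▸ rfl
      -- unfold sigP in hsig
      have hcond : 1 ≤ (k : ℕ) + 1 ∧ (k : ℕ) + 1 ≤ N - 1 ∧ (a : ℕ) < n :=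
        ⟨hj1, hk2, a.isLt⟩
      have hsig2 : sigP N n σ ((k : ℕ) + 1) (a : ℕ) = (a : ℕ) :=
        idx_inj hI (sigP_lt hσ hj1 hk2 hlamj ha) ha hval.symm
      unfold sigP at hsig2
      rw [dif_pos hcond] at hsig2
      have hkk : (⟨(k : ℕ) + 1 - 1, by omega⟩ : Fin N) = k := Fin.ext (by simp)
      rw [hkk] at hsig2
      have haa : (⟨(a : ℕ), hcond.2.2⟩ : Fin n) = a := Fin.ext rfl
      rw [haa] at hsig2
      exact Fin.ext hsig2

/-- Part 2 step (a): only the identity term survives. -/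
lemma W_diag_eq_Ufun (hN : 1 ≤ N) (hlam : ∑ j, lam j = n)
    (hI : IsLamPartition N n lam I) (z : Fin n → ℂ) (h : ℂ) :
    W N n lam I (SigT N n I z) z h = Ufun N n lam I (SigT N n I z) z h := by
  classical
  unfold W
  rw [Finset.sum_eq_single_of_mem _ (one_mem_symSet (lam := lam))]
  · rw [permT_one]
  · intro σ hσ hσne
    by_cases hviol : ∃ j, (1 ≤ j ∧ j ≤ N - 1) ∧ ∃ a, a < Lam N lam j ∧
        ∃ c, c < Lam N lam (j + 1) ∧ Vv N n I σ j a = Vv N n I σ (j + 1) c ∧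
          idx N n I (j + 1) c < idx N n I j a
    · obtain ⟨j, ⟨hj1, hj2⟩, a, ha, c, hc, heq, hlt⟩ := hviol
      exact Ufun_eq_zero lam I I σ z h ⟨hj1, hj2⟩ ha hc heq hlt
    · exfalso
      apply hσne
      apply sigP_of_nonviol hI hlam hσ
      intro j hj1 hj2 a ha c hc heq
      by_contra hcon
      push_neg at hcon
      exact hviol ⟨j, ⟨hj1, hj2⟩, a, ha, c, hc, heq, hcon⟩

end WFS
namespace WFS
open Finset

variable {N n : ℕ} {lam : Fin N → ℕ} {I : Fin N → Finset (Fin n)}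

/-- the elementary factor. -/
def Fz (n : ℕ) (z : Fin n → ℂ) (h : ℂ) (u m : ℕ) : ℂ :=
  (if m < u then zf n z u - zf n z m else 1) *
    (if u < m then zf n z u - zf n z m - h else 1)

lemma Fz_fin (z : Fin n → ℂ) (h : ℂ) (a b : Fin n) :
    Fz n z h (a : ℕ) (b : ℕ) =
      (if b < a then z a - z b else 1) * (if a < b then z a - z b - h else 1) := by
  unfold Fz zf
  rw [dif_pos a.isLt, dif_pos b.isLt]
  simp only [Fin.eta, Fin.lt_def]

lemma TT_SigT (hI : IsLamPartition N n lam I) (hlam : ∑ j, lam j = n)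
    (z : Fin n → ℂ) {j a : ℕ} (ha : a < n) :
    TT N n (SigT N n I z) z j a = zf n z (idx N n I j a) := by
  unfold TT
  by_cases hj : j = N
  · rw [if_pos hj, hj, idx_N_eq hI hlam ha]
  · rw [if_neg hj]; rfl

lemma prod_square (s : Finset ℕ) (F : ℕ → ℕ → ℂ) :
    ∏ a ∈ s, ∏ b ∈ s, F a b
      = ((∏ p ∈ (s ×ˢ s).filter (fun p => p.1 < p.2), (F p.1 p.2 * F p.2 p.1)) *
          ∏ p ∈ (s ×ˢ s).filter (fun p => p.1 = p.2), F p.1 p.2) := by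
  classical
  rw [← Finset.prod_product']
  rw [← Finset.prod_filter_mul_prod_filter_not (s ×ˢ s) (fun p => p.1 < p.2)
    (fun p => F p.1 p.2)]
  rw [← Finset.prod_filter_mul_prod_filter_not
    ((s ×ˢ s).filter (fun p => ¬ p.1 < p.2)) (fun p => p.1 = p.2)
    (fun p => F p.1 p.2)]
  rw [Finset.filter_filter, Finset.filter_filter]
  have hdiag : (s ×ˢ s).filter (fun p => ¬ p.1 < p.2 ∧ p.1 = p.2)
      = (s ×ˢ s).filter (fun p => p.1 = p.2) := by
    apply filter_congr
    intro p _
    constructor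
    · rintro ⟨_, hh⟩; exact hh
    · intro hh; exact ⟨by omega, hh⟩
  have hgt : (s ×ˢ s).filter (fun p => ¬ p.1 < p.2 ∧ ¬ p.1 = p.2)
      = (s ×ˢ s).filter (fun p => p.2 < p.1) := by
    apply filter_congr
    intro p _
    constructor
    · rintro ⟨h1, h2⟩; omega
    · intro hh; omega
  rw [hdiag, hgt]
  have hswap : ∏ p ∈ (s ×ˢ s).filter (fun p => p.2 < p.1), F p.1 p.2
      = ∏ p ∈ (s ×ˢ s).filter (fun p => p.1 < p.2), F p.2 p.1 := by
    apply Finset.prod_bij (i := fun p _ => Prod.swap p)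
    · intro p hp
      simp only [mem_filter, Finset.mem_product] at hp ⊢
      exact ⟨⟨hp.1.2, hp.1.1⟩, hp.2⟩
    · intro p₁ hp₁ p₂ hp₂ heq
      exact Prod.swap_injective heq
    · intro p hp
      refine ⟨Prod.swap p, ?_, ?_⟩
      · simp only [mem_filter, Finset.mem_product] at hp ⊢
        exact ⟨⟨hp.1.2, hp.1.1⟩, hp.2⟩
      · simp
    · intro p _
      rfl
  rw [hswap, Finset.prod_mul_distrib]
  ring

lemma prod_sq_pair {s : Finset ℕ} {G H : ℕ → ℕ → ℂ}
    (hdiag : ∀ a ∈ s, G a a = H a a)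
    (hpair : ∀ a ∈ s, ∀ b ∈ s, a < b → G a b * G b a = H a b * H b a) :
    ∏ a ∈ s, ∏ b ∈ s, G a b = ∏ a ∈ s, ∏ b ∈ s, H a b := by
  rw [prod_square s G, prod_square s H]
  congr 1
  · apply Finset.prod_congr rfl
    intro p hp
    simp only [mem_filter, Finset.mem_product] at hp
    exact hpair p.1 hp.1.1 p.2 hp.1.2 hp.2
  · apply Finset.prod_congr rfl
    intro p hp
    simp only [mem_filter, Finset.mem_product] at hp
    rw [← hp.2]
    exact hdiag p.1 hp.1.1

lemma I_disjoint (hI : IsLamPartition N n lam I) {i k : Fin N} (hik : i ≠ k) :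
    Disjoint (I i) (I k) := by
  rw [Finset.disjoint_left]
  intro x hxi hxk
  exact hik (((hI.2 x).unique hxi hxk))

lemma cupI_zero : cupI N n I 0 = ∅ := by
  ext x
  unfold cupI
  simp only [mem_biUnion, mem_filter, mem_univ, true_and, Finset.notMem_empty, iff_false]
  rintro ⟨k, hk, _⟩
  omega

lemma cupI_succ {j : ℕ} (hj : j < N) :
    cupI N n I (j + 1) = cupI N n I j ∪ I ⟨j, hj⟩ := by
  ext x
  unfold cupI
  simp only [mem_biUnion, mem_filter, mem_univ, true_and, Finset.mem_union]
  constructor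
  · rintro ⟨k, hk, hxk⟩
    by_cases hkj : (k : ℕ) = j
    · right
      have : k = ⟨j, hj⟩ := Fin.ext hkj
      rwa [← this]
    · left; exact ⟨k, by omega, hxk⟩
  · rintro (⟨k, hk, hxk⟩ | hx)
    · exact ⟨k, by omega, hxk⟩
    · exact ⟨⟨j, hj⟩, by simp, hx⟩

lemma disjoint_cupI_block (hI : IsLamPartition N n lam I) {j : ℕ} (hj : j < N) :
    Disjoint (cupI N n I j) (I ⟨j, hj⟩) := by
  rw [Finset.disjoint_left]
  intro x hx1 hx2
  unfold cupI at hx1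
  simp only [mem_biUnion, mem_filter, mem_univ, true_and] at hx1
  obtain ⟨k, hk, hxk⟩ := hx1
  have := (hI.2 x).unique hxk hx2
  rw [this] at hk
  simp at hk

lemma prod_idx_bij (hI : IsLamPartition N n lam I) (j : ℕ) (f : ℕ → ℂ) :
    ∏ c ∈ Finset.range (Lam N lam j), f (idx N n I j c)
      = ∏ x ∈ cupI N n I j, f (x : ℕ) := by
  apply Finset.prod_bij (i := fun (c : ℕ) (hc : c ∈ Finset.range (Lam N lam j)) =>
    (⟨idx N n I j c, idx_lt_n hI (Finset.mem_range.1 hc)⟩ : Fin n))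
  · intro c hc
    obtain ⟨x, hxmem, hxval⟩ := idx_spec hI (Finset.mem_range.1 hc)
    have : (⟨idx N n I j c, idx_lt_n hI (Finset.mem_range.1 hc)⟩ : Fin n) = x :=
      Fin.ext hxval
    rw [this]
    exact hxmem
  · intro c₁ hc₁ c₂ hc₂ heq
    exact idx_inj hI (Finset.mem_range.1 hc₁) (Finset.mem_range.1 hc₂)
      (congrArg Fin.val heq)
  · intro x hx
    obtain ⟨c, hcL, hcval⟩ := idx_surj hI hx
    exact ⟨c, Finset.mem_range.2 hcL, Fin.ext hcval⟩
  · intro c hc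
    rfl

end WFS
namespace WFS
open Finset

variable {N n : ℕ} {lam : Fin N → ℕ} {I : Fin N → Finset (Fin n)}

lemma zf_ne (z : Fin n → ℂ) (hz : Function.Injective z) {u m : ℕ}
    (hu : u < n) (hm : m < n) (hne : u ≠ m) : zf n z u ≠ zf n z m := by
  unfold zf
  rw [dif_pos hu, dif_pos hm]
  intro heq
  have := hz heq
  have := congrArg Fin.val this
  simp at this
  exact hne this

set_option maxHeartbeats 1000000 in
lemma level_eq (hI : IsLamPartition N n lam I) (hlam : ∑ j, lam j = n)
    (z : Fin n → ℂ) (hz : Function.Injective z) (h : ℂ) {j : ℕ}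
    (hj1 : 1 ≤ j) (hj2 : j ≤ N - 1) (hN : 1 ≤ N) :
    (∏ a ∈ Finset.range (Lam N lam j),
      ((∏ c ∈ Finset.range (Lam N lam (j + 1)),
          ((if idx N n I (j + 1) c < idx N n I j a then
              TT N n (SigT N n I z) z j a - TT N n (SigT N n I z) z (j + 1) c else 1) *
            (if idx N n I j a < idx N n I (j + 1) c then
              TT N n (SigT N n I z) z j a - TT N n (SigT N n I z) z (j + 1) c - h else 1))) *
        ∏ b ∈ Finset.range (Lam N lam j),
          (if a < b then
            (TT N n (SigT N n I z) z j b - TT N n (SigT N n I z) z j a - h) /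
              (TT N n (SigT N n I z) z j b - TT N n (SigT N n I z) z j a) else 1)))
    = (∏ a ∈ Finset.range (Lam N lam j), ∏ b ∈ Finset.range (Lam N lam j),
        if b ≠ a then SigT N n I z j a - SigT N n I z j b - h else 1) *
      ∏ u ∈ cupI N n I j, ∏ x ∈ I ⟨j, by omega⟩, Fz n z h (u : ℕ) (x : ℕ) := by
  have hjN : j < N := by omega
  have hΛ : Lam N lam j ≤ n := Lam_le_n hlam j (by omega)
  have hΛ' : Lam N lam (j + 1) ≤ n := Lam_le_n hlam (j + 1) (by omega)
  -- notation
  set Rt : ℕ → ℕ → ℂ := fun a b => if a < b then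
      (zf n z (idx N n I j b) - zf n z (idx N n I j a) - h) /
        (zf n z (idx N n I j b) - zf n z (idx N n I j a)) else 1 with hRt
  have step1 : (∏ a ∈ Finset.range (Lam N lam j),
      ((∏ c ∈ Finset.range (Lam N lam (j + 1)),
          ((if idx N n I (j + 1) c < idx N n I j a then
              TT N n (SigT N n I z) z j a - TT N n (SigT N n I z) z (j + 1) c else 1) *
            (if idx N n I j a < idx N n I (j + 1) c then
              TT N n (SigT N n I z) z j a - TT N n (SigT N n I z) z (j + 1) c - h else 1))) *
        ∏ b ∈ Finset.range (Lam N lam j),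
          (if a < b then
            (TT N n (SigT N n I z) z j b - TT N n (SigT N n I z) z j a - h) /
              (TT N n (SigT N n I z) z j b - TT N n (SigT N n I z) z j a) else 1)))
      = ∏ a ∈ Finset.range (Lam N lam j),
          ((∏ c ∈ Finset.range (Lam N lam (j + 1)),
            Fz n z h (idx N n I j a) (idx N n I (j + 1) c)) *
          ∏ b ∈ Finset.range (Lam N lam j), Rt a b) := by
    apply Finset.prod_congr rfl
    intro a ha
    have han : a < n := by have := Finset.mem_range.1 ha; omega
    congr 1
    · apply Finset.prod_congr rfl
      intro c hc
      have hcn : c < n := by have := Finset.mem_range.1 hc; omega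
      rw [TT_SigT hI hlam z han, TT_SigT hI hlam z hcn]
      rfl
    · apply Finset.prod_congr rfl
      intro b hb
      have hbn : b < n := by have := Finset.mem_range.1 hb; omega
      rw [TT_SigT hI hlam z han, TT_SigT hI hlam z hbn, hRt]
  rw [step1]
  -- split the c-product
  have step2 : ∀ a ∈ Finset.range (Lam N lam j),
      (∏ c ∈ Finset.range (Lam N lam (j + 1)),
        Fz n z h (idx N n I j a) (idx N n I (j + 1) c))
      = (∏ b ∈ Finset.range (Lam N lam j),
            Fz n z h (idx N n I j a) (idx N n I j b)) *
        ∏ x ∈ I ⟨j, hjN⟩, Fz n z h (idx N n I j a) (x : ℕ) := by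
    intro a _
    rw [prod_idx_bij hI (j + 1) (Fz n z h (idx N n I j a)),
      cupI_succ hjN, Finset.prod_union (disjoint_cupI_block hI hjN),
      ← prod_idx_bij hI j (Fz n z h (idx N n I j a))]
  calc ∏ a ∈ Finset.range (Lam N lam j),
        ((∏ c ∈ Finset.range (Lam N lam (j + 1)),
          Fz n z h (idx N n I j a) (idx N n I (j + 1) c)) *
        ∏ b ∈ Finset.range (Lam N lam j), Rt a b)
      = ∏ a ∈ Finset.range (Lam N lam j),
          (((∏ b ∈ Finset.range (Lam N lam j),
              Fz n z h (idx N n I j a) (idx N n I j b)) *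
            ∏ b ∈ Finset.range (Lam N lam j), Rt a b) *
          ∏ x ∈ I ⟨j, hjN⟩, Fz n z h (idx N n I j a) (x : ℕ)) := by
        apply Finset.prod_congr rfl
        intro a ha
        rw [step2 a ha]
        ring
    _ = (∏ a ∈ Finset.range (Lam N lam j),
            ((∏ b ∈ Finset.range (Lam N lam j),
              Fz n z h (idx N n I j a) (idx N n I j b)) *
            ∏ b ∈ Finset.range (Lam N lam j), Rt a b)) *
        ∏ a ∈ Finset.range (Lam N lam j),
          ∏ x ∈ I ⟨j, hjN⟩, Fz n z h (idx N n I j a) (x : ℕ) := by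
        rw [Finset.prod_mul_distrib]
    _ = (∏ a ∈ Finset.range (Lam N lam j), ∏ b ∈ Finset.range (Lam N lam j),
          if b ≠ a then SigT N n I z j a - SigT N n I z j b - h else 1) *
        ∏ u ∈ cupI N n I j, ∏ x ∈ I ⟨j, hjN⟩, Fz n z h (u : ℕ) (x : ℕ) := by
        congr 1
        · -- the pair identity
          have hG : ∀ a ∈ Finset.range (Lam N lam j),
              ((∏ b ∈ Finset.range (Lam N lam j),
                Fz n z h (idx N n I j a) (idx N n I j b)) *
              ∏ b ∈ Finset.range (Lam N lam j), Rt a b)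
              = ∏ b ∈ Finset.range (Lam N lam j),
                  (Fz n z h (idx N n I j a) (idx N n I j b) * Rt a b) := by
            intro a _
            rw [Finset.prod_mul_distrib]
          rw [Finset.prod_congr rfl hG]
          apply prod_sq_pair
          · intro a _
            unfold Fz
            rw [hRt]
            simp [lt_irrefl]
          · intro a ha b hb hab
            have haL : a < Lam N lam j := Finset.mem_range.1 ha
            have hbL : b < Lam N lam j := Finset.mem_range.1 hb
            have hw : idx N n I j a < idx N n I j b := idx_strictMono hI hab hbL
            have hwan : idx N n I j a < n := idx_lt_n hI haL
            have hwbn : idx N n I j b < n := idx_lt_n hI hbL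
            have hBA : zf n z (idx N n I j b) - zf n z (idx N n I j a) ≠ 0 :=
              sub_ne_zero.2 (zf_ne z hz hwbn hwan (by omega))
            unfold Fz
            rw [hRt]
            have h1 : ¬ idx N n I j b < idx N n I j a := by omega
            have h2 : ¬ b < a := by omega
            have h3 : b ≠ a := by omega
            have h4 : a ≠ b := by omega
            have hS : ∀ c : ℕ, SigT N n I z j c = zf n z (idx N n I j c) := fun c => rfl
            simp only [if_pos hw, if_neg h1, if_pos hab, if_neg h2, if_pos h3, if_pos h4,
              hS]
            field_simp
          
        · exact prod_idx_bij hI j (fun u => ∏ x ∈ I ⟨j, hjN⟩, Fz n z h u (x : ℕ))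

end WFS
namespace WFS
open Finset

variable {N n : ℕ} {lam : Fin N → ℕ} {I : Fin N → Finset (Fin n)}

lemma prod_blocks (hI : IsLamPartition N n lam I) (hN : 1 ≤ N)
    (z : Fin n → ℂ) (h : ℂ) :
    (∏ j ∈ Finset.Icc 1 (N - 1), if hj : j < N then
        ∏ u ∈ cupI N n I j, ∏ x ∈ I ⟨j, hj⟩, Fz n z h (u : ℕ) (x : ℕ) else 1)
      = ∏ jj : Fin N, ∏ kk : Fin N,
          (if jj < kk then
            ∏ a ∈ I jj,
              ((∏ b ∈ (I kk).filter (fun b => b < a), (z a - z b)) *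
                ∏ b ∈ (I kk).filter (fun b => a < b), (z a - z b - h))
          else 1) := by
  classical
  symm
  rw [Finset.prod_comm]
  have hc : ∀ kk : Fin N, (∏ jj : Fin N, if jj < kk then
        ∏ a ∈ I jj,
          ((∏ b ∈ (I kk).filter (fun b => b < a), (z a - z b)) *
            ∏ b ∈ (I kk).filter (fun b => a < b), (z a - z b - h)) else 1)
      = ∏ u ∈ cupI N n I (kk : ℕ), ∏ x ∈ I kk, Fz n z h (u : ℕ) (x : ℕ) := by
    intro kk
    rw [← Finset.prod_filter]
    have h1 : ∀ jj ∈ univ.filter (fun jj : Fin N => jj < kk),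
        (∏ a ∈ I jj,
          ((∏ b ∈ (I kk).filter (fun b => b < a), (z a - z b)) *
            ∏ b ∈ (I kk).filter (fun b => a < b), (z a - z b - h)))
        = ∏ a ∈ I jj, ∏ x ∈ I kk, Fz n z h (a : ℕ) (x : ℕ) := by
      intro jj _
      apply Finset.prod_congr rfl
      intro a _
      rw [Finset.prod_filter, Finset.prod_filter, ← Finset.prod_mul_distrib]
      apply Finset.prod_congr rfl
      intro b _
      rw [Fz_fin]
    rw [Finset.prod_congr rfl h1]
    have hdisj : ∀ i₁ ∈ univ.filter (fun jj : Fin N => jj < kk),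
        ∀ i₂ ∈ univ.filter (fun jj : Fin N => jj < kk), i₁ ≠ i₂ →
          Disjoint (I i₁) (I i₂) := by
      intro i₁ _ i₂ _ hne
      exact I_disjoint hI hne
    rw [← Finset.prod_biUnion hdisj]
    have hsets : (univ.filter (fun jj : Fin N => jj < kk)).biUnion I
        = cupI N n I (kk : ℕ) := by
      unfold cupI
      congr 1
    rw [hsets]
  rw [Finset.prod_congr rfl (fun kk _ => hc kk)]
  have hG : ∀ kk : Fin N,
      (∏ u ∈ cupI N n I (kk : ℕ), ∏ x ∈ I kk, Fz n z h (u : ℕ) (x : ℕ))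
      = (fun m => if hm : m < N then
          ∏ u ∈ cupI N n I m, ∏ x ∈ I ⟨m, hm⟩, Fz n z h (u : ℕ) (x : ℕ) else 1) (kk : ℕ) := by
    intro kk
    simp only [dif_pos kk.isLt, Fin.eta]
  rw [Finset.prod_congr rfl (fun kk _ => hG kk)]
  rw [Fin.prod_univ_eq_prod_range (fun m => if hm : m < N then
      ∏ u ∈ cupI N n I m, ∏ x ∈ I ⟨m, hm⟩, Fz n z h (u : ℕ) (x : ℕ) else 1) N]
  have hins : Finset.range N = insert 0 (Finset.Icc 1 (N - 1)) := by
    ext m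
    simp only [Finset.mem_range, Finset.mem_insert, Finset.mem_Icc]
    omega
  rw [hins, Finset.prod_insert (by simp)]
  have h0 : (if hm : (0:ℕ) < N then
      ∏ u ∈ cupI N n I 0, ∏ x ∈ I ⟨0, hm⟩, Fz n z h (u : ℕ) (x : ℕ) else 1) = 1 := by
    rw [dif_pos (by omega : 0 < N), cupI_zero, Finset.prod_empty]
  rw [h0, one_mul]

/-- Part 2 of the theorem. -/
lemma part2 (N n : ℕ) (hN : 1 ≤ N) (hn : 1 ≤ n) (lam : Fin N → ℕ)
    (hlam : ∑ j, lam j = n) (I : Fin N → Finset (Fin n))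
    (hI : IsLamPartition N n lam I) (z : Fin n → ℂ) (hz : Function.Injective z) (h : ℂ) :
    W N n lam I (SigT N n I z) z h =
      clam N n lam (SigT N n I z) h *
        ∏ j : Fin N, ∏ k : Fin N,
          (if j < k then
            ∏ a ∈ I j,
              ((∏ b ∈ (I k).filter (fun b => b < a), (z a - z b)) *
                ∏ b ∈ (I k).filter (fun b => a < b), (z a - z b - h))
          else 1) := by
  rw [W_diag_eq_Ufun hN hlam hI z h]
  rw [← prod_blocks hI hN z h]
  unfold Ufun clam
  rw [← Finset.prod_mul_distrib]
  apply Finset.prod_congr rfl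
  intro j hj
  obtain ⟨hj1, hj2⟩ := Finset.mem_Icc.1 hj
  have hjN : j < N := by omega
  rw [level_eq hI hlam z hz h hj1 hj2 hN, dif_pos hjN]

end WFS
/-- Vanishing and diagonal values of the weight functions at the points `Σ_I`:
if `I ≠ J` and `|σ_I| ≤ |σ_J|` then `W_J(Σ_I;z;h) = 0` identically, and
`W_I(Σ_I;z;h) = c_λ(Σ_I;h) ∏_{j<k} ∏_{a ∈ I_j} [∏_{b ∈ I_k, b<a} (z_a−z_b)
∏_{b ∈ I_k, b>a} (z_a−z_b−h)]`.  The polynomial identities are stated at all points `z` with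
pairwise distinct coordinates (which determines the polynomials uniquely). -/
theorem weight_function_at_Sigma
    (N n : ℕ) (hN : 1 ≤ N) (hn : 1 ≤ n) (lam : Fin N → ℕ) (hlam : ∑ j, lam j = n)
    (I J : Fin N → Finset (Fin n))
    (hI : IsLamPartition N n lam I) (hJ : IsLamPartition N n lam J) :
    ((I ≠ J ∧ lenI N n I ≤ lenI N n J →
        ∀ z : Fin n → ℂ, Function.Injective z → ∀ h : ℂ,
          W N n lam J (SigT N n I z) z h = 0)) ∧
      (∀ z : Fin n → ℂ, Function.Injective z → ∀ h : ℂ,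
        W N n lam I (SigT N n I z) z h =
          clam N n lam (SigT N n I z) h *
            ∏ j : Fin N, ∏ k : Fin N,
              (if j < k then
                ∏ a ∈ I j,
                  ((∏ b ∈ (I k).filter (fun b => b < a), (z a - z b)) *
                    ∏ b ∈ (I k).filter (fun b => a < b), (z a - z b - h))
              else 1)) := by
  constructor
  · rintro ⟨hne, hlen⟩ z hz h
    exact WFS.part1 N n hN hn lam hlam I J hI hJ hne hlen z h
  · intro z hz h
    exact WFS.part2 N n hN hn lam hlam I hI z hz h
end
end
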